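/- arXiv:2108.04464 — 7 statements merged into one kernel-verified Lean document; each statement's English description precedes it below -/
import Mathlib

section
/- Let F_V be a cdf on ℝ, let α ∈ [0,1], and let Z be a random variable uniformly distributed on (0,1) on a probability space (Ω, 𝔽, ℙ). Define Ṽ = F_V^{-1}(Z + α) on the event {Z ≤ 1 − α} and Ṽ = F_V^{-1}(1 − Z) on the event {Z > 1 − α}. Then Ṽ has cdf F_V, i.e., ℙ(Ṽ ≤ z) = max{0, F_V(z) − α} + min{F_V(z), α} = F_V(z) for every z ∈ ℝ. -/
/-!
The law of `Z` is Lebesgue measure on `[0, 1]`. For `u ∈ (0, 1)` other than `1 - α` and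
`1 - F z`, the Galois connection `F⁻¹ t ≤ z ↔ t ≤ F z` (valid for `t ∈ (0, 1)`) turns
`Ṽ ≤ z` into `u ≤ F z - α ∨ 1 - min α (F z) < u`. These are two disjoint subintervals of
`[0, 1]`, of lengths `max 0 (F z - α)` and `min α (F z)`.
-/

open MeasureTheory Filter Topology

/-- The (real-valued) quantile function of a distribution function `F : ℝ → ℝ`:
`F⁻¹(t) = inf {z ∈ ℝ : F(z) ≥ t}`. -/
noncomputable def realQuantile (F : ℝ → ℝ) (t : ℝ) : ℝ :=
  sInf {x : ℝ | t ≤ F x}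

open Set

lemma max_zero_sub_add_min {α : Type*} [AddCommGroup α] [LinearOrder α]
    [IsOrderedAddMonoid α] (a b : α) : max 0 (a - b) + min a b = a := by
  rcases le_total a b with h | h <;> simp [h]

lemma volume_Iic_union_Ioi_inter_Icc {a c : ℝ} (hac : a + c ≤ 1)
    (hc : c ∈ Icc (0 : ℝ) 1) :
    volume ((Iic a ∪ Ioi (1 - c)) ∩ Icc 0 1) = ENNReal.ofReal a + ENNReal.ofReal c := by
  have hlow : Iic a ∩ Icc 0 1 = Icc 0 a := by
    ext x; simp only [mem_inter_iff, mem_Iic, mem_Icc]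
    exact ⟨fun ⟨hxa, hx0, _⟩ => ⟨hx0, hxa⟩,
      fun ⟨hx0, hxa⟩ => ⟨hxa, hx0, by linarith [hc.1]⟩⟩
  have hhigh : Ioi (1 - c) ∩ Icc 0 1 = Ioc (1 - c) 1 := by
    ext x; simp only [mem_inter_iff, mem_Ioi, mem_Icc, mem_Ioc]
    exact ⟨fun ⟨hcx, _, hx1⟩ => ⟨hcx, hx1⟩,
      fun ⟨hcx, hx1⟩ => ⟨hcx, by linarith [hc.2], hx1⟩⟩
  have hdisj : Disjoint (Icc 0 a) (Ioc (1 - c) 1) :=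
    disjoint_left.2 fun x hx hx' => (hx.2.trans (by linarith)).not_gt hx'.1
  rw [union_inter_distrib_right, hlow, hhigh, measure_union hdisj measurableSet_Ioc,
    Real.volume_Icc, Real.volume_Ioc, sub_zero, sub_sub_cancel]

lemma map_eq_volume_restrict_Icc {Ω : Type*} [MeasurableSpace Ω] {P : Measure Ω}
    [IsProbabilityMeasure P] {Z : Ω → ℝ} (hZ : Measurable Z)
    (hZunif : ∀ t ∈ Icc (0 : ℝ) 1, (P {ω | Z ω ≤ t}).toReal = t) :
    P.map Z = volume.restrict (Icc 0 1) := by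
  have hIcc : ∀ t ∈ Icc (0 : ℝ) 1, P {ω | Z ω ≤ t} = ENNReal.ofReal t := fun t ht => by
    rw [← ENNReal.ofReal_toReal (measure_ne_top P _), hZunif t ht]
  have hIic : ∀ t : ℝ, Iic t ∩ Icc 0 1 = Icc 0 (min t 1) := fun t => by
    ext x; simp only [mem_inter_iff, mem_Iic, mem_Icc, le_min_iff]; tauto
  refine (Measure.ext_of_Iic _ _ fun t => ?_).symm
  rw [Measure.restrict_apply measurableSet_Iic, Measure.map_apply hZ measurableSet_Iic, hIic,
    Real.volume_Icc, sub_zero]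
  rcases lt_or_ge t 0 with ht0 | ht0
  · rw [ENNReal.ofReal_of_nonpos (by simp [ht0.le]), eq_comm, ← nonpos_iff_eq_zero]
    calc P {ω | Z ω ≤ t} ≤ P {ω | Z ω ≤ 0} := measure_mono fun ω hω => hω.trans ht0.le
      _ = 0 := by rw [hIcc 0 ⟨le_rfl, zero_le_one⟩, ENNReal.ofReal_zero]
  rcases le_or_gt t 1 with ht1 | ht1
  · rw [min_eq_left ht1]
    exact (hIcc t ⟨ht0, ht1⟩).symm
  · rw [min_eq_right ht1.le, ENNReal.ofReal_one, eq_comm]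
    refine le_antisymm prob_le_one ?_
    calc 1 = P {ω | Z ω ≤ 1} := by rw [hIcc 1 ⟨zero_le_one, le_rfl⟩, ENNReal.ofReal_one]
      _ ≤ P {ω | Z ω ≤ t} := measure_mono fun ω hω => hω.trans ht1.le

structure IsCDF (F : ℝ → ℝ) : Prop where
  mono : Monotone F
  tendsto_nhdsGT : ∀ x, Tendsto F (𝓝[>] x) (𝓝 (F x))
  tendsto_atBot : Tendsto F atBot (𝓝 0)
  tendsto_atTop : Tendsto F atTop (𝓝 1)

namespace IsCDF

variable {F : ℝ → ℝ}

lemma mem_Icc (hF : IsCDF F) (x : ℝ) : F x ∈ Icc 0 1 :=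
  ⟨hF.mono.le_of_tendsto hF.tendsto_atBot x, hF.mono.ge_of_tendsto hF.tendsto_atTop x⟩

lemma realQuantile_le_iff (hF : IsCDF F) {t : ℝ} (ht : t ∈ Ioo 0 1) (z : ℝ) :
    realQuantile F t ≤ z ↔ t ≤ F z := by
  have hne : {x | t ≤ F x}.Nonempty :=
    (hF.tendsto_atTop.eventually (eventually_ge_nhds ht.2)).exists
  have hbdd : BddBelow {x | t ≤ F x} := by
    obtain ⟨x₀, hx₀⟩ :=
      eventually_atBot.1 (hF.tendsto_atBot.eventually (eventually_lt_nhds ht.1))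
    exact ⟨x₀, fun y hy => le_of_not_gt fun hlt => (hx₀ y hlt.le).not_ge hy⟩
  refine ⟨fun h => ?_, fun h => csInf_le hbdd h⟩
  have above : ∀ y ∈ Ioi z, t ≤ F y := fun y hy => by
    obtain ⟨s, hs, hsy⟩ := (csInf_lt_iff hbdd hne).1 (h.trans_lt hy)
    exact hs.trans (hF.mono hsy.le)
  exact ge_of_tendsto (hF.tendsto_nhdsGT z) (eventually_nhdsWithin_of_forall above)

end IsCDF

/-- The paper's `Ṽ` as a function of the value `u` of `Z`. -/
noncomputable def shiftedQuantile (F : ℝ → ℝ) (α u : ℝ) : ℝ :=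
  if u ≤ 1 - α then realQuantile F (u + α) else realQuantile F (1 - u)

lemma shiftedQuantile_le_iff {F : ℝ → ℝ} (hF : IsCDF F) {α u : ℝ} (hα : 0 ≤ α)
    (hu : u ∈ Ioo 0 1) (huα : u ≠ 1 - α) {z : ℝ} (huF : u ≠ 1 - F z) :
    shiftedQuantile F α u ≤ z ↔ u ∈ Iic (F z - α) ∪ Ioi (1 - min α (F z)) := by
  obtain ⟨hu0, hu1⟩ := hu
  have hFz := hF.mem_Icc z
  simp only [shiftedQuantile, mem_union, mem_Iic, mem_Ioi]
  split_ifs with hle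
  · have hlt : u < 1 - α := lt_of_le_of_ne hle huα
    have : ¬1 - min α (F z) < u := by linarith [min_le_left α (F z)]
    rw [hF.realQuantile_le_iff ⟨by linarith, by linarith⟩, or_iff_left this, le_sub_iff_add_le]
  · have hgt : 1 - α < u := not_le.1 hle
    have : ¬u ≤ F z - α := by linarith [hFz.2]
    rw [hF.realQuantile_le_iff ⟨by linarith, by linarith⟩, or_iff_right this, sub_lt_comm,
      lt_min_iff]
    exact ⟨fun h => ⟨by linarith, lt_of_le_of_ne h fun h' => huF (by linarith)⟩,
      fun h => h.2.le⟩

lemma ae_restrict_Icc_shiftedQuantile_le_iff {F : ℝ → ℝ} (hF : IsCDF F) {α : ℝ}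
    (hα : 0 ≤ α) (z : ℝ) : ∀ᵐ u ∂volume.restrict (Icc 0 1),
      shiftedQuantile F α u ≤ z ↔ u ∈ Iic (F z - α) ∪ Ioi (1 - min α (F z)) := by
  -- Off `{0, 1, 1 - α}` the quantile is only evaluated in `(0, 1)`, away from the junk values
  -- of `sInf`; at `u = 1 - F z` the two sides can disagree.
  have hfinite :
      ∀ᵐ u ∂volume.restrict (Icc (0 : ℝ) 1), u ∉ ({0, 1, 1 - α, 1 - F z} : Set ℝ) :=
    ae_restrict_of_ae (measure_eq_zero_iff_ae_notMem.1 ((toFinite _).measure_zero _))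
  filter_upwards [ae_restrict_mem measurableSet_Icc, hfinite] with u ⟨hu0, hu1⟩ hu
  simp only [mem_insert_iff, mem_singleton_iff, not_or] at hu
  obtain ⟨hu0', hu1', huα, huF⟩ := hu
  exact shiftedQuantile_le_iff hF hα
    ⟨lt_of_le_of_ne hu0 (Ne.symm hu0'), lt_of_le_of_ne hu1 hu1'⟩ huα huF

/-- Let `F_V` be a cdf on `ℝ`, `α ∈ [0,1]`, and `Z` uniformly distributed on
`(0,1)`. Define `Ṽ = F_V⁻¹(Z + α)` on `{Z ≤ 1 − α}` and `Ṽ = F_V⁻¹(1 − Z)` on `{Z > 1 − α}`.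
Then `Ṽ` has cdf `F_V`; indeed `ℙ(Ṽ ≤ z) = max{0, F_V(z) − α} + min{F_V(z), α} = F_V(z)` for
every `z ∈ ℝ`. -/
theorem constructed_rv_has_cdf {Ω : Type*} [MeasurableSpace Ω]
    (P : Measure Ω) [IsProbabilityMeasure P]
    (FV : ℝ → ℝ) (hFVmono : Monotone FV)
    (hFVrc : ∀ x : ℝ, Tendsto FV (𝓝[>] x) (𝓝 (FV x)))
    (hFVbot : Tendsto FV atBot (𝓝 0)) (hFVtop : Tendsto FV atTop (𝓝 1))
    (α : ℝ) (hα : α ∈ Set.Icc (0 : ℝ) 1)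
    (Z : Ω → ℝ) (hZ : Measurable Z)
    (hZunif : ∀ t ∈ Set.Icc (0 : ℝ) 1, (P {ω | Z ω ≤ t}).toReal = t)
    (Vt : Ω → ℝ)
    (hVt : Vt = fun ω =>
      if Z ω ≤ 1 - α then realQuantile FV (Z ω + α) else realQuantile FV (1 - Z ω)) :
    ∀ z : ℝ,
      (P {ω | Vt ω ≤ z}).toReal = max 0 (FV z - α) + min (FV z) α ∧
      max 0 (FV z - α) + min (FV z) α = FV z := by
  intro z
  have hF : IsCDF FV := ⟨hFVmono, hFVrc, hFVbot, hFVtop⟩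
  have hFz := hF.mem_Icc z
  have hlaw := map_eq_volume_restrict_Icc hZ hZunif
  set S := Iic (FV z - α) ∪ Ioi (1 - min α (FV z))
  have hS : MeasurableSet S := measurableSet_Iic.union measurableSet_Ioi
  have hVS : {ω | Vt ω ≤ z} =ᵐ[P] Z ⁻¹' S := by
    filter_upwards [ae_of_ae_map hZ.aemeasurable
      (hlaw ▸ ae_restrict_Icc_shiftedQuantile_le_iff hF hα.1 z)] with ω hω
    rw [hVt]
    exact propext hω
  have hPV :
      P {ω | Vt ω ≤ z} = ENNReal.ofReal (FV z - α) + ENNReal.ofReal (min α (FV z)) := by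
    rw [measure_congr hVS, ← Measure.map_apply hZ hS, hlaw, Measure.restrict_apply hS,
      volume_Iic_union_Ioi_inter_Icc (by linarith [min_le_left α (FV z), hFz.2])
        ⟨le_min hα.1 hFz.1, (min_le_left _ _).trans hα.2⟩]
  refine ⟨?_, max_zero_sub_add_min _ _⟩
  rw [hPV, ENNReal.toReal_add ENNReal.ofReal_ne_top ENNReal.ofReal_ne_top,
    ENNReal.toReal_ofReal', ENNReal.toReal_ofReal (le_min hα.1 hFz.1), max_comm, min_comm]
end

section
/- Let (Ω, 𝔽, ℙ) be an atomless probability space, let W be a real-valued random variable on it with cdf F_W, and let F_V be a cdf on ℝ such that at least one of F_W, F_V is continuous. Then the supremum of ℙ(W ≤ V), taken over all random variables V on (Ω, 𝔽, ℙ) whose cdf equals F_V, equals 1 − sup_{z∈ℝ} (F_V(z) − F_W(z)), and this supremum over V is attained by some such V. -/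
open MeasureTheory Filter Topology

/-- A measure is atomless if every set of positive measure contains a measurable subset of
strictly smaller, yet positive, measure. -/
def Atomless {Ω : Type*} [MeasurableSpace Ω] (P : Measure Ω) : Prop :=
  ∀ s : Set Ω, MeasurableSet s → 0 < P s →
    ∃ t : Set Ω, t ⊆ s ∧ MeasurableSet t ∧ 0 < P t ∧ P t < P s

/-!
Every coupling satisfies `ℙ(W ≤ V) ≤ 1 - α` with `α = sup_z (F_V z - F_W z)`, because
`{V ≤ z} ⊆ {W ≤ z} ∪ {V < W}`. For the converse, Sierpiński's theorem lets us interpolate, level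
by dyadic level, a nested family of sets `A_t` with `ℙ(A_t) = t` and
`{W < F_W⁻¹ t} ⊆ A_t ⊆ {W ≤ F_W⁻¹ t}`. Then `U = inf {t | ω ∈ A_t}` is uniform on `(0, 1]` with
`F_W(W-) ≤ U`. Rotating `U` by `α` and applying the quantile function gives
`V = F_V⁻¹(U + α mod 1)` with cdf `F_V`, and on `{U < 1 - α}` the bound `F_V ≤ F_W + α` forces
`W ≤ V`, an event of probability `1 - α`.
-/

open Set ProbabilityTheory
open scoped ENNReal

section Greedy

variable {Ω : Type*} [MeasurableSpace Ω] {μ : Measure Ω} [IsFiniteMeasure μ]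

theorem Monotone.eq_zero_of_forall_le_measure_sdiff_succ {T : ℕ → Set Ω} (hT : Monotone T)
    (hmeas : ∀ n, MeasurableSet (T n)) {η : ℝ≥0∞} (hη : ∀ n, η ≤ μ (T (n + 1) \ T n)) :
    η = 0 := by
  have hgrow : ∀ n : ℕ, n * η ≤ μ (T n) := by
    intro n
    induction n with
    | zero => simp
    | succ n ih =>
      calc ((n + 1 : ℕ) : ℝ≥0∞) * η = n * η + η := by push_cast; ring
        _ ≤ μ (T n) + μ (T (n + 1) \ T n) := add_le_add ih (hη n)
        _ = μ (T (n + 1)) := by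
          rw [measure_add_sdiff (hmeas n).nullMeasurableSet, union_eq_right.2 (hT n.le_succ)]
  by_contra h0
  obtain ⟨n, hn⟩ := ENNReal.exists_nat_mul_gt h0 (measure_ne_top μ univ)
  exact (hn.trans_le (hgrow n)).not_ge (measure_mono (subset_univ _))

/-- One greedy step: `t'` adds to `t` at least half of the largest addition inside `s` that keeps
the measure `≤ c`. -/
theorem exists_greedy_superset {s t : Set Ω} (hts : t ⊆ s) (ht : MeasurableSet t) {c : ℝ≥0∞}
    (htc : μ t ≤ c) : ∃ t', t ⊆ t' ∧ t' ⊆ s ∧ MeasurableSet t' ∧ μ t' ≤ c ∧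
      ∀ u ⊆ s \ t, MeasurableSet u → μ t + μ u ≤ c → μ u ≤ 2 * μ (t' \ t) := by
  set room := ⨆ (u : Set Ω) (_ : u ⊆ s \ t ∧ MeasurableSet u ∧ μ t + μ u ≤ c), μ u
  have hroom : ∀ u ⊆ s \ t, MeasurableSet u → μ t + μ u ≤ c → μ u ≤ room :=
    fun u hu hum huc => le_iSup₂_of_le u ⟨hu, hum, huc⟩ le_rfl
  rcases eq_or_ne room 0 with h0 | h0
  · refine ⟨t, subset_rfl, hts, ht, htc, fun u hu hum huc => ?_⟩
    simpa [h0] using hroom u hu hum huc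
  have hfin : room ≠ ∞ := ne_top_of_le_ne_top (measure_ne_top μ s)
    (iSup₂_le fun u hu => measure_mono (hu.1.trans sdiff_subset))
  obtain ⟨u, ⟨hu, hum, huc⟩, hlt⟩ := lt_biSup_iff.1 (ENNReal.half_lt_self h0 hfin)
  replace hlt : room / 2 < μ u := hlt
  have hdiff : (t ∪ u) \ t = u := by
    rw [union_sdiff_left, sdiff_eq_left.2 (disjoint_of_subset_left hu disjoint_sdiff_left)]
  refine ⟨t ∪ u, subset_union_left, union_subset hts (hu.trans sdiff_subset), ht.union hum,
    (measure_union_le t u).trans huc, fun v hv hvm hvc => ?_⟩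
  rw [hdiff]
  calc μ v ≤ room := hroom v hv hvm hvc
    _ = 2 * (room / 2) := (ENNReal.mul_div_cancel two_ne_zero ENNReal.ofNat_ne_top).symm
    _ ≤ 2 * μ u := by gcongr

end Greedy

namespace Atomless

variable {Ω : Type*} [MeasurableSpace Ω] {μ : Measure Ω} {s : Set Ω}

theorem exists_subset_two_mul_measure_le (hμ : Atomless μ) (hs : MeasurableSet s)
    (h : 0 < μ s) : ∃ t ⊆ s, MeasurableSet t ∧ 0 < μ t ∧ 2 * μ t ≤ μ s := by
  obtain ⟨t, hts, ht, ht0, hlt⟩ := hμ s hs h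
  have hsum : μ t + μ (s \ t) = μ s := by
    rw [measure_add_sdiff ht.nullMeasurableSet, union_eq_right.2 hts]
  rcases le_total (μ t) (μ (s \ t)) with hle | hle
  · exact ⟨t, hts, ht, ht0, by rw [two_mul, ← hsum]; gcongr⟩
  · refine ⟨s \ t, sdiff_subset, hs.diff ht, pos_of_ne_zero fun h0 => hlt.ne ?_, ?_⟩
    · rw [← hsum, h0, add_zero]
    · rw [two_mul, ← hsum]; gcongr

theorem exists_subset_measure_pos_lt [IsFiniteMeasure μ] (hμ : Atomless μ)
    (hs : MeasurableSet s) (h : 0 < μ s) {ε : ℝ≥0∞} (hε : 0 < ε) :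
    ∃ t ⊆ s, MeasurableSet t ∧ 0 < μ t ∧ μ t < ε := by
  have halve : ∀ n : ℕ, ∃ t ⊆ s, MeasurableSet t ∧ 0 < μ t ∧ 2 ^ n * μ t ≤ μ s := by
    intro n
    induction n with
    | zero => exact ⟨s, subset_rfl, hs, h, by simp⟩
    | succ n ih =>
      obtain ⟨t, hts, ht, ht0, htle⟩ := ih
      obtain ⟨u, hut, hu, hu0, hule⟩ := hμ.exists_subset_two_mul_measure_le ht ht0
      refine ⟨u, hut.trans hts, hu, hu0, le_trans ?_ htle⟩
      rw [pow_succ, mul_assoc]; gcongr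
  obtain ⟨n, hn⟩ := ENNReal.exists_nat_mul_gt hε.ne' (measure_ne_top μ s)
  obtain ⟨t, hts, ht, ht0, htle⟩ := halve n
  refine ⟨t, hts, ht, ht0, lt_of_mul_lt_mul_left' (a := 2 ^ n) ?_⟩
  calc 2 ^ n * μ t ≤ μ s := htle
    _ < n * ε := hn
    _ ≤ 2 ^ n * ε := by gcongr; exact_mod_cast Nat.lt_two_pow_self.le

/-- Sierpiński's theorem. -/
theorem exists_subset_measure_eq [IsFiniteMeasure μ] (hμ : Atomless μ) (hs : MeasurableSet s)
    {c : ℝ≥0∞} (hc : c ≤ μ s) : ∃ t ⊆ s, MeasurableSet t ∧ μ t = c := by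
  set 𝒜 : Set (Set Ω) := {t | t ⊆ s ∧ MeasurableSet t ∧ μ t ≤ c}
  choose! next hsub_next hnext_sub hnext_meas hnext_le hnext_big using
    fun t (ht : t ∈ 𝒜) => exists_greedy_superset ht.1 ht.2.1 ht.2.2
  set T : ℕ → Set Ω := fun n => next^[n] ∅
  have hT : ∀ n, T (n + 1) = next (T n) := fun n => Function.iterate_succ_apply' next n ∅
  have hT𝒜 : ∀ n, T n ∈ 𝒜 := by
    intro n
    induction n with
    | zero => exact ⟨empty_subset s, MeasurableSet.empty, by simp [T]⟩
    | succ n ih => rw [hT]; exact ⟨hnext_sub _ ih, hnext_meas _ ih, hnext_le _ ih⟩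
  have hTmono : Monotone T :=
    monotone_nat_of_le_succ fun n => by rw [hT]; exact hsub_next _ (hT𝒜 n)
  set T' := ⋃ n, T n
  have hT' : T' ∈ 𝒜 := ⟨iUnion_subset fun n => (hT𝒜 n).1,
    MeasurableSet.iUnion fun n => (hT𝒜 n).2.1,
    by rw [hTmono.measure_iUnion]; exact iSup_le fun n => (hT𝒜 n).2.2⟩
  refine ⟨T', hT'.1, hT'.2.1, hT'.2.2.antisymm (not_lt.1 fun hlt => ?_)⟩
  -- otherwise a fixed positive addition stays admissible forever, so the increments of `T` do not
  -- tend to `0`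
  obtain ⟨u, hu, hum, hu0, hulim⟩ := hμ.exists_subset_measure_pos_lt (hs.diff hT'.2.1)
    (by rw [measure_sdiff hT'.1 hT'.2.1.nullMeasurableSet (measure_ne_top μ _)]
        exact tsub_pos_of_lt (hlt.trans_le hc))
    (tsub_pos_of_lt hlt)
  have hinc : ∀ n, μ u / 2 ≤ μ (T (n + 1) \ T n) := fun n => by
    refine ENNReal.div_le_of_le_mul ?_
    rw [hT, mul_comm]
    refine hnext_big _ (hT𝒜 n) u (hu.trans (sdiff_subset_sdiff_right (subset_iUnion T n))) hum ?_
    calc μ (T n) + μ u ≤ μ T' + (c - μ T') := add_le_add (measure_mono (subset_iUnion T n)) hulim.le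
      _ = c := add_tsub_cancel_of_le hT'.2.2
  have h0 := hTmono.eq_zero_of_forall_le_measure_sdiff_succ (fun n => (hT𝒜 n).2.1) hinc
  simp only [ENNReal.div_eq_zero_iff, ENNReal.ofNat_ne_top, or_false] at h0
  exact hu0.ne' h0

theorem exists_subset_superset_measure_eq [IsFiniteMeasure μ] (hμ : Atomless μ) {A B : Set Ω}
    (hA : MeasurableSet A) (hB : MeasurableSet B) (hAB : A ⊆ B) {c : ℝ≥0∞} (hAc : μ A ≤ c)
    (hcB : c ≤ μ B) : ∃ s, A ⊆ s ∧ s ⊆ B ∧ MeasurableSet s ∧ μ s = c := by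
  obtain ⟨u, huBA, hu, hμu⟩ := hμ.exists_subset_measure_eq (hB.diff hA) (c := c - μ A)
    (by rw [measure_sdiff hAB hA.nullMeasurableSet (measure_ne_top μ A)]; gcongr)
  refine ⟨A ∪ u, subset_union_left, union_subset hAB (huBA.trans sdiff_subset), hA.union hu, ?_⟩
  rw [measure_union (disjoint_of_subset_right huBA disjoint_sdiff_right) hu, hμu,
    add_tsub_cancel_of_le hAc]

end Atomless

section DyadicChain

variable {α : Type*}

/-- Level `n + 1` keeps the entries of level `n` at even indices and fills the odd index
`2 * j + 1` with `mid` applied to the positions and entries of its neighbours `j`, `j + 1`. -/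
noncomputable def dyadicChain (a b : α) (mid : ℝ → ℝ → α → α → α) : ℕ → ℕ → α
  | 0, k => if k = 0 then a else b
  | n + 1, k =>
    if Even k then dyadicChain a b mid n (k / 2)
    else mid ((k / 2 : ℕ) / 2 ^ n) ((k / 2 + 1 : ℕ) / 2 ^ n) (dyadicChain a b mid n (k / 2))
      (dyadicChain a b mid n (k / 2 + 1))

variable {a b : α} {mid : ℝ → ℝ → α → α → α}

theorem dyadicChain_succ_two_mul (n j : ℕ) :
    dyadicChain a b mid (n + 1) (2 * j) = dyadicChain a b mid n j := by
  simp [dyadicChain]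

theorem dyadicChain_succ_two_mul_add_one (n j : ℕ) :
    dyadicChain a b mid (n + 1) (2 * j + 1) =
      mid (j / 2 ^ n) ((j + 1 : ℕ) / 2 ^ n) (dyadicChain a b mid n j)
        (dyadicChain a b mid n (j + 1)) := by
  simp [dyadicChain, Nat.mul_add_div]

theorem dyadicChain_add_mul_two_pow (n m k : ℕ) :
    dyadicChain a b mid (n + m) (k * 2 ^ m) = dyadicChain a b mid n k := by
  induction m with
  | zero => simp
  | succ m ih =>
    rw [← add_assoc, show k * 2 ^ (m + 1) = 2 * (k * 2 ^ m) by ring, dyadicChain_succ_two_mul, ih]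

variable [Preorder α]

theorem dyadicChain_spec (Q : ℝ → α → Prop) (ha : Q 0 a) (hb : Q 1 b) (hab : a ≤ b)
    (hmid : ∀ s t x y, s < t → Q s x → Q t y → x ≤ y →
      Q ((s + t) / 2) (mid s t x y) ∧ x ≤ mid s t x y ∧ mid s t x y ≤ y) (n : ℕ) :
    (∀ k : ℕ, k ≤ 2 ^ n → Q (k / 2 ^ n) (dyadicChain a b mid n k)) ∧
      ∀ k < 2 ^ n, dyadicChain a b mid n k ≤ dyadicChain a b mid n (k + 1) := by
  induction n with
  | zero =>
    refine ⟨fun k hk => ?_, fun k hk => ?_⟩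
    · interval_cases k <;> simpa [dyadicChain]
    · obtain rfl : k = 0 := by simpa using hk
      simpa [dyadicChain]
  | succ n ih =>
    obtain ⟨hQ, hle⟩ := ih
    have hodd : ∀ j < 2 ^ n,
        Q ((2 * j + 1 : ℕ) / 2 ^ (n + 1)) (dyadicChain a b mid (n + 1) (2 * j + 1)) ∧
        dyadicChain a b mid n j ≤ dyadicChain a b mid (n + 1) (2 * j + 1) ∧
        dyadicChain a b mid (n + 1) (2 * j + 1) ≤ dyadicChain a b mid n (j + 1) := by
      intro j hj
      have hpos : (j : ℝ) / 2 ^ n < (j + 1 : ℕ) / 2 ^ n := by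
        gcongr; exact_mod_cast j.lt_succ_self
      rw [dyadicChain_succ_two_mul_add_one]
      obtain ⟨hQmid, hlmid, hmidr⟩ := hmid _ _ _ _ hpos (hQ j hj.le) (hQ (j + 1) hj) (hle j hj)
      refine ⟨?_, hlmid, hmidr⟩
      convert hQmid using 1
      push_cast; field_simp; ring
    refine ⟨fun k hk => ?_, fun k hk => ?_⟩
    · obtain ⟨j, rfl | rfl⟩ := Nat.even_or_odd' k
      · rw [dyadicChain_succ_two_mul]
        convert hQ j (by omega) using 1
        push_cast; field_simp; ring
      · exact (hodd j (by omega)).1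
    · obtain ⟨j, rfl | rfl⟩ := Nat.even_or_odd' k
      · simpa only [dyadicChain_succ_two_mul] using (hodd j (by omega)).2.1
      · simpa only [show 2 * j + 1 + 1 = 2 * (j + 1) by ring, dyadicChain_succ_two_mul]
          using (hodd j (by omega)).2.2

theorem exists_dyadic_chain (Q : ℝ → α → Prop) (ha : Q 0 a) (hb : Q 1 b) (hab : a ≤ b)
    (hmid : ∀ s t x y, s < t → Q s x → Q t y → x ≤ y → ∃ z, Q ((s + t) / 2) z ∧ x ≤ z ∧ z ≤ y) :
    ∃ S : ℕ → ℕ → α, (∀ n k : ℕ, k ≤ 2 ^ n → Q (k / 2 ^ n) (S n k)) ∧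
      ∀ n k m l : ℕ, l ≤ 2 ^ m → (k : ℝ) / 2 ^ n ≤ l / 2 ^ m → S n k ≤ S m l := by
  choose! mid hmid using hmid
  have hspec := dyadicChain_spec Q ha hb hab hmid
  have hmono : ∀ N k l, k ≤ l → l ≤ 2 ^ N → dyadicChain a b mid N k ≤ dyadicChain a b mid N l := by
    intro N k l hkl hl
    induction l, hkl using Nat.le_induction with
    | base => exact le_rfl
    | succ l _ ih => exact (ih (by omega)).trans ((hspec N).2 l (by omega))
  refine ⟨dyadicChain a b mid, fun n k hk => (hspec n).1 k hk, fun n k m l hl hkl => ?_⟩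
  -- compare both entries at the common level `n + m`
  have hcross : k * 2 ^ m ≤ l * 2 ^ n := by
    rw [div_le_div_iff₀ (by positivity) (by positivity)] at hkl
    exact_mod_cast hkl
  rw [← dyadicChain_add_mul_two_pow n m k, ← dyadicChain_add_mul_two_pow m n l, add_comm m n]
  exact hmono _ _ _ hcross (by rw [pow_add, mul_comm (2 ^ n)]; gcongr)

end DyadicChain

section DyadicInf

variable {Ω : Type*} {S : ℕ → ℕ → Set Ω}

open Classical in
noncomputable def dyadicInf (S : ℕ → ℕ → Set Ω) (ω : Ω) : ℝ :=
  ⨅ p : ℕ × ℕ, if p.2 ≤ 2 ^ p.1 ∧ ω ∈ S p.1 p.2 then (p.2 : ℝ) / 2 ^ p.1 else 1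

open Classical in
theorem bddBelow_range_dyadicInf (ω : Ω) :
    BddBelow (range fun p : ℕ × ℕ =>
      if p.2 ≤ 2 ^ p.1 ∧ ω ∈ S p.1 p.2 then (p.2 : ℝ) / 2 ^ p.1 else 1) :=
  ⟨0, by rintro _ ⟨p, rfl⟩; dsimp only; split_ifs <;> positivity⟩

theorem dyadicInf_nonneg (ω : Ω) : 0 ≤ dyadicInf S ω :=
  le_ciInf fun p => by split_ifs <;> positivity

theorem dyadicInf_le {ω : Ω} {n k : ℕ} (hk : k ≤ 2 ^ n) (hω : ω ∈ S n k) :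
    dyadicInf S ω ≤ k / 2 ^ n :=
  ciInf_le_of_le (bddBelow_range_dyadicInf ω) (n, k) (by simp [hk, hω])

theorem dyadicInf_le_one (ω : Ω) : dyadicInf S ω ≤ 1 :=
  ciInf_le_of_le (bddBelow_range_dyadicInf ω) (0, 0) (by dsimp only; split_ifs <;> simp)

theorem le_dyadicInf {ω : Ω} {y : ℝ} (hy : y ≤ 1)
    (h : ∀ n k : ℕ, k ≤ 2 ^ n → ω ∈ S n k → y ≤ k / 2 ^ n) : y ≤ dyadicInf S ω :=
  le_ciInf fun p => by split_ifs with hω; exacts [h _ _ hω.1 hω.2, hy]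

theorem mem_of_dyadicInf_lt
    (hmono : ∀ n k m l : ℕ, l ≤ 2 ^ m → (k : ℝ) / 2 ^ n ≤ l / 2 ^ m → S n k ⊆ S m l)
    {ω : Ω} {n k : ℕ} (hk : k ≤ 2 ^ n) (hω : dyadicInf S ω < k / 2 ^ n) : ω ∈ S n k := by
  obtain ⟨p, hp⟩ := (ciInf_lt_iff (bddBelow_range_dyadicInf ω)).1 hω
  split_ifs at hp with hωp
  · exact hmono _ _ _ _ hk hp.le hωp.2
  · exact absurd hp (not_lt.2 (div_le_one_of_le₀ (by exact_mod_cast hk) (by positivity)))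

variable [MeasurableSpace Ω] {P : Measure Ω}

theorem measurable_dyadicInf (hmeas : ∀ n k : ℕ, k ≤ 2 ^ n → MeasurableSet (S n k)) :
    Measurable (dyadicInf S) := by
  refine Measurable.iInf fun p => Measurable.ite ?_ measurable_const measurable_const
  by_cases hp : p.2 ≤ 2 ^ p.1
  · simpa [hp] using hmeas _ _ hp
  · simp [hp]

theorem measure_dyadicInf_le (hP : ∀ n k : ℕ, k ≤ 2 ^ n → P (S n k) = ENNReal.ofReal (k / 2 ^ n))
    (hmono : ∀ n k m l : ℕ, l ≤ 2 ^ m → (k : ℝ) / 2 ^ n ≤ l / 2 ^ m → S n k ⊆ S m l)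
    {t : ℝ} (ht₀ : 0 ≤ t) (ht₁ : t < 1) :
    P (dyadicInf S ⁻¹' Iic t) = ENNReal.ofReal t := by
  -- bracket `t` between consecutive points of level `n`
  set k : ℕ → ℕ := fun n => ⌊t * 2 ^ n⌋₊
  have hk : ∀ n, k n < 2 ^ n := fun n => by
    have h2n : (0 : ℝ) < 2 ^ n := by positivity
    rw [Nat.floor_lt (by positivity)]; push_cast; nlinarith
  have hlow : ∀ n, ENNReal.ofReal (k n / 2 ^ n) ≤ P (dyadicInf S ⁻¹' Iic t) := fun n => by
    rw [← hP n (k n) (hk n).le]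
    refine measure_mono fun ω hω => (dyadicInf_le (hk n).le hω).trans ?_
    rw [div_le_iff₀ (by positivity)]; exact Nat.floor_le (by positivity)
  have hup : ∀ n, P (dyadicInf S ⁻¹' Iic t) ≤ ENNReal.ofReal ((k n + 1 : ℕ) / 2 ^ n) :=
    fun n => by
      rw [← hP n (k n + 1) (hk n)]
      refine measure_mono fun ω (hω : dyadicInf S ω ≤ t) => mem_of_dyadicInf_lt hmono (hk n) ?_
      refine hω.trans_lt ?_
      rw [lt_div_iff₀ (by positivity)]; push_cast; exact Nat.lt_floor_add_one _
  have hlim : Tendsto (fun n => (k n : ℝ) / 2 ^ n) atTop (𝓝 t) :=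
    (tendsto_nat_floor_mul_div_atTop ht₀).comp (tendsto_pow_atTop_atTop_of_one_lt one_lt_two)
  have hlim' : Tendsto (fun n => ((k n + 1 : ℕ) : ℝ) / 2 ^ n) atTop (𝓝 t) := by
    have h := hlim.add (tendsto_inv_atTop_zero.comp (tendsto_pow_atTop_atTop_of_one_lt one_lt_two))
    simpa [add_div] using h
  exact le_antisymm (ge_of_tendsto' (ENNReal.tendsto_ofReal hlim') hup)
    (le_of_tendsto' (ENNReal.tendsto_ofReal hlim) hlow)

theorem map_dyadicInf [IsProbabilityMeasure P]
    (hmeas : ∀ n k : ℕ, k ≤ 2 ^ n → MeasurableSet (S n k))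
    (hP : ∀ n k : ℕ, k ≤ 2 ^ n → P (S n k) = ENNReal.ofReal (k / 2 ^ n))
    (hmono : ∀ n k m l : ℕ, l ≤ 2 ^ m → (k : ℝ) / 2 ^ n ≤ l / 2 ^ m → S n k ⊆ S m l) :
    P.map (dyadicInf S) = volume.restrict (Ioc 0 1) := by
  refine Measure.ext_of_Iic _ _ fun t => ?_
  rw [Measure.map_apply (measurable_dyadicInf hmeas) measurableSet_Iic,
    Measure.restrict_apply measurableSet_Iic]
  rcases lt_or_ge t 0 with ht₀ | ht₀
  · have h₁ : dyadicInf S ⁻¹' Iic t = ∅ :=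
      eq_empty_of_forall_notMem fun ω hω => (hω.trans_lt ht₀).not_ge (dyadicInf_nonneg ω)
    have h₂ : Iic t ∩ Ioc 0 1 = ∅ :=
      eq_empty_of_forall_notMem fun x hx => (hx.1.trans_lt ht₀).not_gt hx.2.1
    simp [h₁, h₂]
  rcases le_or_gt 1 t with ht₁ | ht₁
  · have h₁ : dyadicInf S ⁻¹' Iic t = univ :=
      eq_univ_of_forall fun ω => (dyadicInf_le_one ω).trans ht₁
    rw [h₁, inter_eq_right.2 (Ioc_subset_Iic_self.trans (Iic_subset_Iic.2 ht₁))]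
    simp
  rw [inter_comm, Ioc_inter_Iic, min_eq_right ht₁.le, Real.volume_Ioc, sub_zero]
  exact measure_dyadicInf_le hP hmono ht₀ ht₁

end DyadicInf

section QuantileBands

variable (F : ℝ → ℝ)

/-- For `0 < t < 1` and a cdf `F` this is `Iio c`, where `c = sInf {z | t < F z}` is the upper
`t`-quantile of `F`; written without `c`, it also has the right meaning at `t = 0` and `t = 1`. -/
def quantileIio (t : ℝ) : Set ℝ := {x | ∃ z, x < z ∧ F z ≤ t}

/-- The companion `Iic c` of `quantileIio F t`. -/
def quantileIic (t : ℝ) : Set ℝ := {x | ∀ z < x, F z ≤ t}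

theorem measurableSet_quantileIio (t : ℝ) : MeasurableSet (quantileIio F t) :=
  IsLowerSet.ordConnected (s := quantileIio F t)
    (fun _ _ hyx ⟨z, hz, hFz⟩ => ⟨z, hyx.trans_lt hz, hFz⟩) |>.measurableSet

theorem measurableSet_quantileIic (t : ℝ) : MeasurableSet (quantileIic F t) :=
  IsLowerSet.ordConnected (s := quantileIic F t)
    (fun _ _ hyx h z hz => h z (hz.trans_le hyx)) |>.measurableSet

theorem quantileIio_mono : Monotone (quantileIio F) :=
  fun _ _ htt' _ ⟨z, hz, hFz⟩ => ⟨z, hz, hFz.trans htt'⟩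

theorem quantileIic_mono : Monotone (quantileIic F) :=
  fun _ _ htt' _ h z hz => (h z hz).trans htt'

variable {F}

theorem quantileIio_subset_quantileIic (hF : Monotone F) (t : ℝ) :
    quantileIio F t ⊆ quantileIic F t := by
  rintro x ⟨z, hxz, hz⟩ y hyx
  exact (hF (hyx.trans hxz).le).trans hz

/-- If `x ∈ quantileIic F t \ quantileIio F t'`, then `F ≤ t` left of `x` and `F > t'` right of `x`,
so `x` is the quantile at both levels. -/
theorem quantileIic_subset_quantileIio_or (t t' : ℝ) :
    quantileIic F t ⊆ quantileIio F t' ∨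
      quantileIio F t' ⊆ quantileIio F t ∧ quantileIic F t' ⊆ quantileIic F t := by
  refine or_iff_not_imp_left.2 fun hsub => ?_
  obtain ⟨x, hxt, hxt'⟩ := not_subset.1 hsub
  simp only [quantileIio, mem_ofPred_eq, not_exists, not_and, not_le] at hxt'
  constructor
  · rintro y ⟨z, hyz, hz⟩
    have hzx : z ≤ x := le_of_not_gt fun hxz => (hxt' z hxz).not_ge hz
    obtain ⟨w, hyw, hwz⟩ := exists_between hyz
    exact ⟨w, hyw, hxt w (hwz.trans_le hzx)⟩
  · intro y hy z hzy
    have hyx : y ≤ x := le_of_not_gt fun hxy => by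
      obtain ⟨w, hxw, hwy⟩ := exists_between hxy
      exact (hxt' w hxw).not_ge (hy w hwy)
    exact hxt z (hzy.trans_le hyx)

variable (μ : Measure ℝ) [IsProbabilityMeasure μ]

theorem measure_quantileIio_le (t : ℝ) : μ (quantileIio (cdf μ) t) ≤ ENNReal.ofReal t := by
  calc μ (quantileIio (cdf μ) t) ≤ μ (⋃ q : {q : ℚ // cdf μ q ≤ t}, Iic (q : ℝ)) := by
        refine measure_mono fun x ⟨z, hxz, hz⟩ => ?_
        obtain ⟨q, hxq, hqz⟩ := exists_rat_btwn hxz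
        exact mem_iUnion.2 ⟨⟨q, (monotone_cdf μ hqz.le).trans hz⟩, hxq.le⟩
    _ = ⨆ q : {q : ℚ // cdf μ q ≤ t}, μ (Iic (q : ℝ)) :=
        (Monotone.directed_le fun q q' h => Iic_subset_Iic.2 (by exact_mod_cast h)).measure_iUnion
    _ ≤ ENNReal.ofReal t :=
        iSup_le fun q => by rw [← ofReal_cdf]; exact ENNReal.ofReal_le_ofReal q.2

theorem ofReal_le_measure_quantileIic {t : ℝ} (ht : t ≤ 1) :
    ENNReal.ofReal t ≤ μ (quantileIic (cdf μ) t) := by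
  have hcompl : μ (quantileIic (cdf μ) t)ᶜ ≤ 1 - ENNReal.ofReal t := calc
    μ (quantileIic (cdf μ) t)ᶜ ≤ μ (⋃ q : {q : ℚ // t < cdf μ q}, Ioi (q : ℝ)) := by
        refine measure_mono fun x hx => ?_
        simp only [quantileIic, mem_compl_iff, mem_ofPred_eq, not_forall, not_le] at hx
        obtain ⟨z, hzx, hz⟩ := hx
        obtain ⟨q, hzq, hqx⟩ := exists_rat_btwn hzx
        exact mem_iUnion.2 ⟨⟨q, hz.trans_le (monotone_cdf μ hzq.le)⟩, hqx⟩
    _ = ⨆ q : {q : ℚ // t < cdf μ q}, μ (Ioi (q : ℝ)) :=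
        Antitone.directed_le (fun q q' h => Ioi_subset_Ioi (by exact_mod_cast h)) |>.measure_iUnion
    _ ≤ 1 - ENNReal.ofReal t := iSup_le fun q => by
        rw [← compl_Iic, prob_compl_eq_one_sub measurableSet_Iic, ← ofReal_cdf]
        exact tsub_le_tsub_left (ENNReal.ofReal_le_ofReal q.2.le) 1
  calc ENNReal.ofReal t = 1 - (1 - ENNReal.ofReal t) :=
        (ENNReal.sub_sub_cancel ENNReal.one_ne_top (ENNReal.ofReal_le_one.2 ht)).symm
    _ ≤ 1 - μ (quantileIic (cdf μ) t)ᶜ := tsub_le_tsub_left hcompl 1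
    _ = μ (quantileIic (cdf μ) t) := by
        rw [prob_compl_eq_one_sub (measurableSet_quantileIic _ t), ENNReal.sub_sub_cancel
          ENNReal.one_ne_top prob_le_one]

end QuantileBands

section QuantileSets

variable {Ω : Type*} [MeasurableSpace Ω]

/-- The sets `A_t` of the construction. -/
structure IsQuantileSet (P : Measure Ω) (W : Ω → ℝ) (t : ℝ) (s : Set Ω) : Prop where
  measurableSet : MeasurableSet s
  measure_eq : P s = ENNReal.ofReal t
  preimage_quantileIio_subset : W ⁻¹' quantileIio (cdf (P.map W)) t ⊆ s
  subset_preimage_quantileIic : s ⊆ W ⁻¹' quantileIic (cdf (P.map W)) t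

variable {P : Measure Ω} [IsProbabilityMeasure P] {W : Ω → ℝ}

theorem Atomless.exists_isQuantileSet_between (hP : Atomless P) (hW : Measurable W)
    {t₁ t t₂ : ℝ} {s₁ s₂ : Set Ω} (ht₁ : t₁ ≤ t) (ht₂ : t ≤ t₂) (h₁ : IsQuantileSet P W t₁ s₁)
    (h₂ : IsQuantileSet P W t₂ s₂) (hs : s₁ ⊆ s₂) :
    ∃ s, IsQuantileSet P W t s ∧ s₁ ⊆ s ∧ s ⊆ s₂ := by
  have : IsProbabilityMeasure (P.map W) := Measure.isProbabilityMeasure_map hW.aemeasurable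
  set F := cdf (P.map W)
  set L := W ⁻¹' quantileIio F t
  set R := W ⁻¹' quantileIic F t
  have hL : MeasurableSet L := hW (measurableSet_quantileIio F t)
  have hR : MeasurableSet R := hW (measurableSet_quantileIic F t)
  -- Sierpiński's theorem fills the gap between `s₁ ∪ L` and `s₂ ∩ R`
  have hlow : P (s₁ ∪ L) ≤ ENNReal.ofReal t := by
    rcases quantileIic_subset_quantileIio_or t₁ t with h | ⟨h, -⟩
    · rw [union_eq_right.2 (h₁.subset_preimage_quantileIic.trans (preimage_mono h)),
        ← Measure.map_apply hW (measurableSet_quantileIio F t)]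
      exact measure_quantileIio_le _ t
    · rw [union_eq_left.2 ((preimage_mono h).trans h₁.preimage_quantileIio_subset), h₁.measure_eq]
      exact ENNReal.ofReal_le_ofReal ht₁
  have hup : ENNReal.ofReal t ≤ P (s₂ ∩ R) := by
    rcases quantileIic_subset_quantileIio_or t t₂ with h | ⟨-, h⟩
    · have ht1 : t ≤ 1 := ht₂.trans (ENNReal.ofReal_le_one.1 (h₂.measure_eq ▸ prob_le_one))
      rw [inter_eq_right.2 ((preimage_mono h).trans h₂.preimage_quantileIio_subset),
        ← Measure.map_apply hW (measurableSet_quantileIic F t)]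
      exact ofReal_le_measure_quantileIic _ ht1
    · rw [inter_eq_left.2 (h₂.subset_preimage_quantileIic.trans (preimage_mono h)), h₂.measure_eq]
      exact ENNReal.ofReal_le_ofReal ht₂
  have hLR : L ⊆ R := preimage_mono (quantileIio_subset_quantileIic (monotone_cdf _) t)
  have hsub : s₁ ∪ L ⊆ s₂ ∩ R := union_subset
    (subset_inter hs (h₁.subset_preimage_quantileIic.trans
      (preimage_mono (quantileIic_mono F ht₁))))
    (subset_inter ((preimage_mono (quantileIio_mono F ht₂)).trans h₂.preimage_quantileIio_subset)
      hLR)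
  obtain ⟨s, hAs, hsB, hs, hPs⟩ := hP.exists_subset_superset_measure_eq (h₁.measurableSet.union hL)
    (h₂.measurableSet.inter hR) hsub hlow hup
  exact ⟨s, ⟨hs, hPs, subset_union_right.trans hAs, hsB.trans inter_subset_right⟩,
    subset_union_left.trans hAs, hsB.trans inter_subset_left⟩

theorem Atomless.exists_uniform_cdf_le (hP : Atomless P) (hW : Measurable W) :
    ∃ U : Ω → ℝ, Measurable U ∧ P.map U = volume.restrict (Ioc 0 1) ∧
      ∀ ω, ∀ z < W ω, cdf (P.map W) z ≤ U ω := by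
  have : IsProbabilityMeasure (P.map W) := Measure.isProbabilityMeasure_map hW.aemeasurable
  set F := cdf (P.map W)
  have h₀ : IsQuantileSet P W 0 (W ⁻¹' quantileIio F 0) := by
    refine ⟨hW (measurableSet_quantileIio F 0), le_antisymm ?_ (by simp), subset_rfl,
      preimage_mono (quantileIio_subset_quantileIic (monotone_cdf _) 0)⟩
    rw [← Measure.map_apply hW (measurableSet_quantileIio F 0)]
    exact measure_quantileIio_le _ 0
  have h₁ : IsQuantileSet P W 1 univ :=
    ⟨MeasurableSet.univ, by simp, subset_univ _, fun _ _ z _ => cdf_le_one _ z⟩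
  obtain ⟨S, hS, hmono⟩ := exists_dyadic_chain (IsQuantileSet P W) h₀ h₁ (subset_univ _)
    fun s t x y hst hx hy hxy =>
      hP.exists_isQuantileSet_between hW (by linarith) (by linarith) hx hy hxy
  have hmeas : ∀ n k : ℕ, k ≤ 2 ^ n → MeasurableSet (S n k) :=
    fun n k hk => (hS n k hk).measurableSet
  exact ⟨dyadicInf S, measurable_dyadicInf hmeas,
    map_dyadicInf hmeas (fun n k hk => (hS n k hk).measure_eq) hmono,
    fun ω z hz => le_dyadicInf (cdf_le_one _ z) fun n k hk hω =>
      (hS n k hk).subset_preimage_quantileIic hω z hz⟩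

end QuantileSets

section UniformTransforms

/-- The rotation by `a` of the circle `(0, 1]`. -/
noncomputable def rotateIoc (a u : ℝ) : ℝ := if u ≤ 1 - a then u + a else u + (a - 1)

theorem measurable_rotateIoc (a : ℝ) : Measurable (rotateIoc a) :=
  Measurable.ite measurableSet_Iic (measurable_add_const a) (measurable_add_const (a - 1))

theorem map_rotateIoc_volume_restrict_Ioc {a : ℝ} (ha₀ : 0 ≤ a) (ha₁ : a ≤ 1) :
    (volume.restrict (Ioc (0 : ℝ) 1)).map (rotateIoc a) = volume.restrict (Ioc 0 1) := by
  ext A hA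
  rw [Measure.map_apply (measurable_rotateIoc a) hA,
    Measure.restrict_apply (measurable_rotateIoc a hA), Measure.restrict_apply hA]
  have hsplit : rotateIoc a ⁻¹' A ∩ Ioc 0 1 =
      (fun u => u + a) ⁻¹' (A ∩ Ioc a 1) ∪ (fun u => u + (a - 1)) ⁻¹' (A ∩ Ioc 0 a) := by
    ext u
    simp only [rotateIoc, mem_inter_iff, mem_preimage, mem_union, mem_Ioc]
    split_ifs <;> grind
  have hdisj : Disjoint ((fun u => u + a) ⁻¹' (A ∩ Ioc a 1))
      ((fun u => u + (a - 1)) ⁻¹' (A ∩ Ioc 0 a)) :=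
    Set.disjoint_left.2 fun u h₁ h₂ => by
      simp only [mem_preimage, mem_inter_iff, mem_Ioc] at h₁ h₂; linarith [h₁.2.2, h₂.2.1]
  have hdisj' : Disjoint (A ∩ Ioc a 1) (A ∩ Ioc 0 a) :=
    Set.disjoint_left.2 fun u h₁ h₂ => (h₁.2.1.trans_le h₂.2.2).false
  rw [hsplit, measure_union hdisj ((measurable_add_const _) (hA.inter measurableSet_Ioc)),
    measure_preimage_add_right, measure_preimage_add_right,
    ← measure_union hdisj' (hA.inter measurableSet_Ioc), ← inter_union_distrib_left, union_comm,
    Ioc_union_Ioc_eq_Ioc ha₀ ha₁]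

theorem map_volume_restrict_Ioc_of_eqOn {g : ℝ → ℝ} (hg : EqOn g id (Ioo 0 1)) :
    (volume.restrict (Ioc (0 : ℝ) 1)).map g = volume.restrict (Ioc 0 1) := by
  rw [← Measure.restrict_congr_set Ioo_ae_eq_Ioc,
    Measure.map_congr ((ae_restrict_iff' measurableSet_Ioo).2 (Eventually.of_forall hg)),
    Measure.map_id]

variable {Ω : Type*} [MeasurableSpace Ω] {P : Measure Ω} {U : Ω → ℝ}

theorem measure_preimage_eq_volume_inter (hU : Measurable U)
    (hlaw : P.map U = volume.restrict (Ioc 0 1)) {A : Set ℝ} (hA : MeasurableSet A) :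
    P (U ⁻¹' A) = volume (A ∩ Ioc 0 1) := by
  rw [← Measure.map_apply hU hA, hlaw, Measure.restrict_apply hA]

/-- `U'` is `U` rotated by `a`, then moved into `(0, 1)` on a null set. -/
theorem exists_uniform_eq_add (hU : Measurable U) (hlaw : P.map U = volume.restrict (Ioc 0 1))
    {a : ℝ} (ha₀ : 0 ≤ a) (ha₁ : a ≤ 1) :
    ∃ U' : Ω → ℝ, Measurable U' ∧ P.map U' = volume.restrict (Ioc 0 1) ∧
      (∀ ω, U' ω ∈ Ioo 0 1) ∧ ∀ ω, U ω ∈ Ioo 0 (1 - a) → U' ω = U ω + a := by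
  set clamp : ℝ → ℝ := fun u => if u ∈ Ioo 0 1 then u else 1 / 2
  have hclamp : Measurable clamp := Measurable.ite measurableSet_Ioo measurable_id measurable_const
  have hrotate := measurable_rotateIoc a
  refine ⟨clamp ∘ rotateIoc a ∘ U, hclamp.comp (hrotate.comp hU), ?_, fun ω => ?_, fun ω hω => ?_⟩
  · rw [← Measure.map_map hclamp (hrotate.comp hU), ← Measure.map_map hrotate hU, hlaw,
      map_rotateIoc_volume_restrict_Ioc ha₀ ha₁]
    exact map_volume_restrict_Ioc_of_eqOn fun u hu => if_pos hu
  · simp only [Function.comp_apply, clamp]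
    split_ifs with h
    exacts [h, ⟨by norm_num, by norm_num⟩]
  · have hrot : rotateIoc a (U ω) = U ω + a := if_pos hω.2.le
    simp only [Function.comp_apply, hrot, clamp]
    exact if_pos ⟨by linarith [hω.1], by linarith [hω.2]⟩

end UniformTransforms

section UpperQuantile

variable {F : ℝ → ℝ}

/-- The upper quantile function of a cdf `F`; only its values on `(0, 1)` matter. -/
noncomputable def upperQuantile (F : ℝ → ℝ) (p : ℝ) : ℝ := sInf {z | p < F z}

theorem nonempty_setOf_lt_of_lt_one (htop : Tendsto F atTop (𝓝 1)) {p : ℝ} (hp : p < 1) :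
    {z | p < F z}.Nonempty :=
  (htop.eventually_const_lt hp).exists

theorem bddBelow_setOf_lt_of_pos (hmono : Monotone F) (hbot : Tendsto F atBot (𝓝 0)) {p : ℝ}
    (hp : 0 < p) : BddBelow {z | p < F z} := by
  obtain ⟨z₀, hz₀⟩ := (hbot.eventually_lt_const hp).exists
  exact ⟨z₀, fun z (hz : p < F z) =>
    le_of_not_gt fun hzz₀ => (hz.trans_le (hmono hzz₀.le)).not_gt hz₀⟩

theorem upperQuantile_le (hmono : Monotone F) (hbot : Tendsto F atBot (𝓝 0)) {p z : ℝ}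
    (hp : 0 < p) (hz : p < F z) : upperQuantile F p ≤ z :=
  csInf_le (bddBelow_setOf_lt_of_pos hmono hbot hp) hz

theorem le_apply_upperQuantile (hmono : Monotone F) (hrc : ∀ x, Tendsto F (𝓝[>] x) (𝓝 (F x)))
    (htop : Tendsto F atTop (𝓝 1)) {p : ℝ} (hp : p ∈ Ioo 0 1) :
    p ≤ F (upperQuantile F p) := by
  by_contra! hlt
  obtain ⟨y, hFy, hy⟩ := ((hrc _).eventually_lt_const hlt |>.and self_mem_nhdsWithin).exists
  obtain ⟨z, hz, hzy⟩ := exists_lt_of_csInf_lt (nonempty_setOf_lt_of_lt_one htop hp.2) hy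
  exact (hz.trans_le (hmono hzy.le)).not_gt hFy

theorem monotoneOn_upperQuantile (hmono : Monotone F) (hbot : Tendsto F atBot (𝓝 0))
    (htop : Tendsto F atTop (𝓝 1)) : MonotoneOn (upperQuantile F) (Ioo 0 1) :=
  fun _ hp _ hq hpq => csInf_le_csInf (bddBelow_setOf_lt_of_pos hmono hbot hp.1)
    (nonempty_setOf_lt_of_lt_one htop hq.2) fun _ hz => hpq.trans_lt hz

theorem le_upperQuantile_add (htop : Tendsto F atTop (𝓝 1)) {G : ℝ → ℝ} {a u x : ℝ}
    (hFG : ∀ z, F z - G z ≤ a) (hu : u + a < 1) (hx : ∀ z < x, G z ≤ u) :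
    x ≤ upperQuantile F (u + a) :=
  le_csInf (nonempty_setOf_lt_of_lt_one htop hu) fun y (hy : u + a < F y) =>
    le_of_not_gt fun hyx => by linarith [hFG y, hx y hyx]

variable {Ω : Type*} [MeasurableSpace Ω] {P : Measure Ω} {U : Ω → ℝ}

theorem measurable_upperQuantile_comp (hmono : Monotone F) (hbot : Tendsto F atBot (𝓝 0))
    (htop : Tendsto F atTop (𝓝 1)) (hU : Measurable U) (hU01 : ∀ ω, U ω ∈ Ioo 0 1) :
    Measurable fun ω => upperQuantile F (U ω) := by
  refine measurable_of_Iic fun x => ?_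
  have hpre : (fun ω => upperQuantile F (U ω)) ⁻¹' Iic x =
      U ⁻¹' {p | p ∈ Ioo 0 1 ∧ upperQuantile F p ≤ x} := by
    ext ω; exact ⟨fun h => ⟨hU01 ω, h⟩, And.right⟩
  rw [hpre]
  refine hU (OrdConnected.measurableSet ⟨fun p hp q hq r hpqr => ?_⟩)
  have hr : r ∈ Ioo 0 1 := ⟨hp.1.1.trans_le hpqr.1, hpqr.2.trans_lt hq.1.2⟩
  exact ⟨hr, (monotoneOn_upperQuantile hmono hbot htop hr hq.1 hpqr.2).trans hq.2⟩

theorem measure_upperQuantile_comp_le (hmono : Monotone F)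
    (hrc : ∀ x, Tendsto F (𝓝[>] x) (𝓝 (F x))) (hbot : Tendsto F atBot (𝓝 0))
    (htop : Tendsto F atTop (𝓝 1)) (hU : Measurable U)
    (hlaw : P.map U = volume.restrict (Ioc 0 1)) (hU01 : ∀ ω, U ω ∈ Ioo 0 1) (z : ℝ) :
    P {ω | upperQuantile F (U ω) ≤ z} = ENNReal.ofReal (F z) := by
  have hF1 : F z ≤ 1 := hmono.ge_of_tendsto htop z
  refine le_antisymm ?_ ?_
  · calc P {ω | upperQuantile F (U ω) ≤ z} ≤ P (U ⁻¹' Iic (F z)) := measure_mono fun ω hω =>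
          (le_apply_upperQuantile hmono hrc htop (hU01 ω)).trans (hmono hω)
      _ = ENNReal.ofReal (F z) := by
          rw [measure_preimage_eq_volume_inter hU hlaw measurableSet_Iic, inter_comm,
            Ioc_inter_Iic, min_eq_right hF1, Real.volume_Ioc, sub_zero]
  · calc ENNReal.ofReal (F z) = P (U ⁻¹' Ioo 0 (F z)) := by
          rw [measure_preimage_eq_volume_inter hU hlaw measurableSet_Ioo,
            Ioo_inter_Ioc_of_left_le hF1, max_self, Real.volume_Ioo, sub_zero]
      _ ≤ P {ω | upperQuantile F (U ω) ≤ z} := measure_mono fun ω hω =>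
          upperQuantile_le hmono hbot hω.1 hω.2

end UpperQuantile

section Coupling

variable {Ω : Type*} [MeasurableSpace Ω] {P : Measure Ω} [IsProbabilityMeasure P] {W V : Ω → ℝ}

theorem measureReal_le_le_add_measureReal_lt (z : ℝ) :
    P.real {ω | V ω ≤ z} ≤ P.real {ω | W ω ≤ z} + P.real {ω | V ω < W ω} :=
  (measureReal_mono fun ω (hω : V ω ≤ z) => (le_or_gt (W ω) z).imp id hω.trans_lt).trans
    (measureReal_union_le _ _)

theorem measureReal_le_le_one_sub_iSup (hW : Measurable W) (hV : Measurable V) :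
    P.real {ω | W ω ≤ V ω} ≤ 1 - ⨆ z, (P.real {ω | V ω ≤ z} - P.real {ω | W ω ≤ z}) := by
  rw [le_sub_comm]
  refine ciSup_le fun z => ?_
  have hcompl : P.real {ω | V ω < W ω} = 1 - P.real {ω | W ω ≤ V ω} := by
    rw [← probReal_compl_eq_one_sub (measurableSet_le hW hV)]
    simp only [compl_ofPred, not_le]
  linarith [measureReal_le_le_add_measureReal_lt (P := P) (W := W) (V := V) z]

theorem Atomless.exists_cdf_eq_one_sub_iSup_le (hP : Atomless P) (hW : Measurable W)
    {F : ℝ → ℝ} (hmono : Monotone F) (hrc : ∀ x, Tendsto F (𝓝[>] x) (𝓝 (F x)))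
    (hbot : Tendsto F atBot (𝓝 0)) (htop : Tendsto F atTop (𝓝 1)) :
    ∃ V : Ω → ℝ, Measurable V ∧ (∀ z, P {ω | V ω ≤ z} = ENNReal.ofReal (F z)) ∧
      ENNReal.ofReal (1 - ⨆ z, (F z - cdf (P.map W) z)) ≤ P {ω | W ω ≤ V ω} := by
  have : IsProbabilityMeasure (P.map W) := Measure.isProbabilityMeasure_map hW.aemeasurable
  set a := ⨆ z, (F z - cdf (P.map W) z)
  have hbdd : BddAbove (range fun z => F z - cdf (P.map W) z) := ⟨1, by
    rintro _ ⟨z, rfl⟩; linarith [hmono.ge_of_tendsto htop z, cdf_nonneg (P.map W) z]⟩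
  have ha₀ : 0 ≤ a := le_of_tendsto (by simpa using htop.sub (tendsto_cdf_atTop (P.map W)))
    (Eventually.of_forall fun z => le_ciSup hbdd z)
  have ha₁ : a ≤ 1 :=
    ciSup_le fun z => by linarith [hmono.ge_of_tendsto htop z, cdf_nonneg (P.map W) z]
  obtain ⟨U, hU, hUlaw, hUW⟩ := hP.exists_uniform_cdf_le hW
  obtain ⟨U', hU', hU'law, hU'01, hU'U⟩ := exists_uniform_eq_add hU hUlaw ha₀ ha₁
  refine ⟨fun ω => upperQuantile F (U' ω), measurable_upperQuantile_comp hmono hbot htop hU' hU'01,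
    measure_upperQuantile_comp_le hmono hrc hbot htop hU' hU'law hU'01, ?_⟩
  calc ENNReal.ofReal (1 - a) = P (U ⁻¹' Ioo 0 (1 - a)) := by
        rw [measure_preimage_eq_volume_inter hU hUlaw measurableSet_Ioo,
          Ioo_inter_Ioc_of_left_le (by linarith), max_self, Real.volume_Ioo, sub_zero]
    _ ≤ P {ω | W ω ≤ upperQuantile F (U' ω)} := measure_mono fun ω hω => by
        change W ω ≤ _
        rw [hU'U ω hω]
        exact le_upperQuantile_add htop (fun z => le_ciSup hbdd z) (by linarith [hω.2]) (hUW ω)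

end Coupling

theorem sup_prob_le_eq_and_attained_general {Ω : Type*} [MeasurableSpace Ω]
    (P : Measure Ω) [IsProbabilityMeasure P] (hatomless : Atomless P)
    (W : Ω → ℝ) (hW : Measurable W)
    (FW : ℝ → ℝ) (hFW : FW = fun z => (P {ω | W ω ≤ z}).toReal)
    (FV : ℝ → ℝ) (hFVmono : Monotone FV)
    (hFVrc : ∀ x : ℝ, Tendsto FV (𝓝[>] x) (𝓝 (FV x)))
    (hFVbot : Tendsto FV atBot (𝓝 0)) (hFVtop : Tendsto FV atTop (𝓝 1)) :
    IsGreatest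
      {p : ℝ | ∃ V : Ω → ℝ, Measurable V ∧ (∀ z : ℝ, (P {ω | V ω ≤ z}).toReal = FV z) ∧
        p = (P {ω | W ω ≤ V ω}).toReal}
      (1 - ⨆ z : ℝ, (FV z - FW z)) := by
  have : IsProbabilityMeasure (P.map W) := Measure.isProbabilityMeasure_map hW.aemeasurable
  have hFW_cdf : FW = cdf (P.map W) := by
    ext z; rw [hFW, cdf_eq_real, map_measureReal_apply hW measurableSet_Iic]; rfl
  have hbound : ∀ V, Measurable V → (∀ z, (P {ω | V ω ≤ z}).toReal = FV z) →
      (P {ω | W ω ≤ V ω}).toReal ≤ 1 - ⨆ z, (FV z - FW z) := fun V hV hVcdf => by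
    simpa only [measureReal_def, hVcdf, hFW] using measureReal_le_le_one_sub_iSup (P := P) hW hV
  obtain ⟨V, hV, hVcdf, hVW⟩ :=
    hatomless.exists_cdf_eq_one_sub_iSup_le hW hFVmono hFVrc hFVbot hFVtop
  have hVcdf' : ∀ z, (P {ω | V ω ≤ z}).toReal = FV z := fun z => by
    rw [hVcdf, ENNReal.toReal_ofReal (hFVmono.le_of_tendsto hFVbot z)]
  refine ⟨⟨V, hV, hVcdf', le_antisymm ?_ (hbound V hV hVcdf')⟩, ?_⟩
  · rw [hFW_cdf]
    exact (ENNReal.ofReal_le_iff_le_toReal (measure_ne_top _ _)).1 hVW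
  · rintro p ⟨V', hV', hV'cdf, rfl⟩
    exact hbound V' hV' hV'cdf

/-- On an atomless probability space, for a random variable `W` with cdf `F_W`
and a cdf `F_V` on `ℝ` with at least one of them continuous, the supremum of `ℙ(W ≤ V)` over all
random variables `V` with cdf `F_V` equals `1 − sup_{z∈ℝ} (F_V(z) − F_W(z))`, and it is
attained. -/
theorem sup_prob_le_eq_and_attained {Ω : Type*} [MeasurableSpace Ω]
    (P : Measure Ω) [IsProbabilityMeasure P] (hatomless : Atomless P)
    (W : Ω → ℝ) (hW : Measurable W)
    (FW : ℝ → ℝ) (hFW : FW = fun z => (P {ω | W ω ≤ z}).toReal)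
    (FV : ℝ → ℝ) (hFVmono : Monotone FV)
    (hFVrc : ∀ x : ℝ, Tendsto FV (𝓝[>] x) (𝓝 (FV x)))
    (hFVbot : Tendsto FV atBot (𝓝 0)) (hFVtop : Tendsto FV atTop (𝓝 1))
    (hcont : Continuous FW ∨ Continuous FV) :
    IsGreatest
      {p : ℝ | ∃ V : Ω → ℝ, Measurable V ∧ (∀ z : ℝ, (P {ω | V ω ≤ z}).toReal = FV z) ∧
        p = (P {ω | W ω ≤ V ω}).toReal}
      (1 - ⨆ z : ℝ, (FV z - FW z)) :=
  sup_prob_le_eq_and_attained_general P hatomless W hW FW hFW FV hFVmono hFVrc hFVbot hFVtop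
end

section
/- Let (Ω, 𝔽, ℙ) be an atomless probability space, let W be a real-valued random variable with cdf F_W, and let F_V be a cdf on ℝ such that at least one of F_W, F_V is continuous. Then, with all suprema and infima taken over random variables V on (Ω, 𝔽, ℙ) with cdf F_V: (i) sup_V ℙ(W ≥ V) = sup_V ℙ(W > V); (ii) inf_V ℙ(W < V) = inf_V ℙ(W ≤ V); (iii) inf_V ℙ(W > V) = inf_V ℙ(W ≥ V). -/
/-!
Strict and non-strict comparisons differ only on ties `V = W`, so it suffices to perturb a given
`V` into some `V'` with the same law that lies strictly below `V` (or, after reflecting through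
`x ↦ -x`, strictly above) outside an event of probability at most `ε`.
Let `D` be the countable set of atoms of the law of `V`, and keep `V' = V` on `{V ∈ D}`. On the
complement the conditional law `ν` of `V` is atomless, so `F_ν(V)` is uniform on `(0, 1)`, and
`V' = F_ν⁻¹(F_ν(V) - ε mod 1)` has law `ν` again and is smaller than `V` unless `F_ν(V) ≤ ε`.
The ties left on `{V ∈ D}` are null because either `F_V` is continuous (then `D = ∅`) or `F_W` is
(then `ℙ(W ∈ D) = 0`). Hence `ℙ(V ≤ W) ≤ ℙ(V' < W) + ε` and `ℙ(W ≤ V') ≤ ℙ(W < V) + ε`, and the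
three identities follow as `ε → 0`.
-/

open MeasureTheory Filter Topology

open Set ProbabilityTheory

lemma csSup_image_eq_of_forall_le_add {ι : Type*} {S : Set ι} {f g : ι → ℝ}
    (hf : BddAbove (f '' S)) (hgf : ∀ i ∈ S, g i ≤ f i)
    (hfg : ∀ i ∈ S, ∀ ε > 0, ∃ j ∈ S, f i ≤ g j + ε) : sSup (f '' S) = sSup (g '' S) := by
  rcases S.eq_empty_or_nonempty with rfl | hS
  · simp
  obtain ⟨b, hb⟩ := hf
  have hg : BddAbove (g '' S) :=
    ⟨b, forall_mem_image.2 fun i hi => (hgf i hi).trans (hb (mem_image_of_mem f hi))⟩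
  refine le_antisymm (csSup_le (hS.image f) (forall_mem_image.2 fun i hi => ?_))
    (csSup_le (hS.image g) (forall_mem_image.2 fun i hi =>
      (hgf i hi).trans (le_csSup ⟨b, hb⟩ (mem_image_of_mem f hi))))
  refine le_of_forall_pos_le_add fun ε hε => ?_
  obtain ⟨j, hj, hij⟩ := hfg i hi ε hε
  exact hij.trans (by gcongr; exact le_csSup hg (mem_image_of_mem g hj))

lemma csInf_image_eq_of_forall_le_add {ι : Type*} {S : Set ι} {f g : ι → ℝ}
    (hg : BddBelow (g '' S)) (hgf : ∀ i ∈ S, g i ≤ f i)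
    (hfg : ∀ i ∈ S, ∀ ε > 0, ∃ j ∈ S, f j ≤ g i + ε) : sInf (g '' S) = sInf (f '' S) := by
  rcases S.eq_empty_or_nonempty with rfl | hS
  · simp
  obtain ⟨b, hb⟩ := hg
  have hf : BddBelow (f '' S) :=
    ⟨b, forall_mem_image.2 fun i hi => (hb (mem_image_of_mem g hi)).trans (hgf i hi)⟩
  refine le_antisymm (le_csInf (hS.image f) (forall_mem_image.2 fun i hi =>
      (csInf_le ⟨b, hb⟩ (mem_image_of_mem g hi)).trans (hgf i hi)))
    (le_csInf (hS.image g) (forall_mem_image.2 fun i hi => ?_))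
  refine le_of_forall_pos_le_add fun ε hε => ?_
  obtain ⟨j, hj, hji⟩ := hfg i hi ε hε
  exact (csInf_le hf (mem_image_of_mem f hj)).trans hji

lemma volume_restrict_Ioo_Iic_le (c : ℝ) :
    volume.restrict (Ioo (0 : ℝ) 1) (Iic c) ≤ ENNReal.ofReal c := by
  rw [Measure.restrict_apply measurableSet_Iic]
  calc volume (Iic c ∩ Ioo 0 1) ≤ volume (Ioc 0 c) :=
        measure_mono fun u hu => ⟨hu.2.1, hu.1⟩
    _ = ENNReal.ofReal c := by rw [Real.volume_Ioc, sub_zero]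

lemma volume_restrict_Ioo_Iic {c : ℝ} (hc : c ≤ 1) :
    volume.restrict (Ioo (0 : ℝ) 1) (Iic c) = ENNReal.ofReal c := by
  refine le_antisymm (volume_restrict_Ioo_Iic_le c) ?_
  rw [Measure.restrict_apply measurableSet_Iic]
  calc ENNReal.ofReal c = volume (Ioo 0 c) := by rw [Real.volume_Ioo, sub_zero]
    _ ≤ volume (Iic c ∩ Ioo 0 1) := measure_mono fun u hu => ⟨hu.2.le, hu.1, hu.2.trans_le hc⟩

lemma measurePreserving_toIocMod_add (e : ℝ) :
    MeasurePreserving (fun u => toIocMod one_pos 0 (u + e))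
      (volume.restrict (Ioo 0 1)) (volume.restrict (Ioo 0 1)) := by
  rw [Measure.restrict_congr_set Ioo_ae_eq_Ioc]
  have h1 := AddCircle.measurePreserving_mk (1 : ℝ) 0
  have h2 := measurePreserving_add_right (volume : Measure (AddCircle (1 : ℝ))) e
  have h3 := AddCircle.measurePreserving_equivIoc (1 : ℝ) (a := 0)
  have h4 : MeasurePreserving ((↑) : Ioc (0 : ℝ) (0 + 1) → ℝ)
      (Measure.comap ((↑) : Ioc (0 : ℝ) (0 + 1) → ℝ) volume) (volume.restrict (Ioc 0 (0 + 1))) :=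
    ⟨measurable_subtype_coe, map_comap_subtype_coe measurableSet_Ioc _⟩
  have := h4.comp (h3.comp (h2.comp h1))
  convert this using 1
  · ext u
    simp only [Function.comp_apply, AddCircle.equivIoc, ← AddCircle.coe_add,
      QuotientAddGroup.equivIocMod_coe]
  all_goals simp

lemma measurePreserving_piecewise_id {α : Type*} [MeasurableSpace α] {μ : Measure α}
    [IsFiniteMeasure μ] {s : Set α} [DecidablePred (· ∈ s)] (hs : MeasurableSet s) {T : α → α}
    (hT : MeasurePreserving T μ[|sᶜ] μ[|sᶜ]) : MeasurePreserving (s.piecewise id T) μ μ := by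
  have hmeas : Measurable (s.piecewise id T) := measurable_id.piecewise hs hT.measurable
  refine ⟨hmeas, Measure.ext fun t ht => ?_⟩
  have hcompl : μ (T ⁻¹' t \ s) = μ (t \ s) := by
    rw [sdiff_eq_compl_inter, sdiff_eq_compl_inter, ← cond_mul_eq_inter hs.compl,
      ← cond_mul_eq_inter hs.compl, hT.measure_preimage ht.nullMeasurableSet]
  rw [Measure.map_apply hmeas ht, piecewise_preimage, Set.ite, preimage_id,
    measure_union (disjoint_sdiff_right.mono_left inter_subset_right) ((hT.measurable ht).diff hs),
    hcompl, measure_inter_add_sdiff t hs]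

lemma measureReal_le_add_of_ae_le_union {α : Type*} [MeasurableSpace α] {μ : Measure α}
    [IsFiniteMeasure μ] {s t b : Set α} (h : s ≤ᵐ[μ] (t ∪ b : Set α)) {ε : ℝ} (hε : 0 ≤ ε)
    (hb : μ b ≤ ENNReal.ofReal ε) : μ.real s ≤ μ.real t + ε := by
  have h' : μ s ≤ μ t + ENNReal.ofReal ε :=
    (measure_mono_ae h).trans ((measure_union_le t b).trans (by gcongr))
  have h'' := ENNReal.toReal_le_add h' (measure_ne_top _ _) ENNReal.ofReal_ne_top
  rwa [ENNReal.toReal_ofReal hε] at h''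

namespace ProbabilityTheory

section Quantile

variable {μ : Measure ℝ}

lemma measure_singleton_eq_zero_iff_continuousAt_cdf [IsProbabilityMeasure μ] (a : ℝ) :
    μ {a} = 0 ↔ ContinuousAt (cdf μ) a := by
  have h := (cdf μ).measure_singleton a
  rw [measure_cdf] at h
  rw [h, (monotone_cdf μ).continuousAt_iff_leftLim_eq_rightLim, (cdf μ).rightLim_eq,
    ENNReal.ofReal_eq_zero, sub_nonpos]
  exact ⟨fun h' => le_antisymm ((monotone_cdf μ).leftLim_le le_rfl) h', Eq.ge⟩

lemma continuous_cdf [IsProbabilityMeasure μ] [NullSingletonClass μ] : Continuous (cdf μ) :=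
  continuous_iff_continuousAt.2 fun a =>
    (measure_singleton_eq_zero_iff_continuousAt_cdf a).1 (measure_singleton a)

lemma countable_setOf_measure_singleton_ne_zero [IsProbabilityMeasure μ] :
    {x | μ {x} ≠ 0}.Countable := by
  simpa only [ne_eq, measure_singleton_eq_zero_iff_continuousAt_cdf] using
    (monotone_cdf μ).countable_not_continuousAt

/-- Junk outside `(0, 1)`, where the set is unbounded below or may be empty. -/
noncomputable def quantile (μ : Measure ℝ) (u : ℝ) : ℝ := sInf {x | u ≤ cdf μ x}

lemma quantile_le_iff {u : ℝ} (hu : u ∈ Ioo 0 1) (x : ℝ) :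
    quantile μ u ≤ x ↔ u ≤ cdf μ x := by
  have hne : {x | u ≤ cdf μ x}.Nonempty :=
    (((tendsto_cdf_atTop μ).eventually (lt_mem_nhds hu.2)).exists).imp fun _ => le_of_lt
  obtain ⟨b, hb⟩ := eventually_atBot.1 ((tendsto_cdf_atBot μ).eventually (gt_mem_nhds hu.1))
  have hbdd : BddBelow {x | u ≤ cdf μ x} :=
    ⟨b, fun y hy => le_of_not_gt fun hyb => (hb y hyb.le).not_ge hy⟩
  have hcdf : u ≤ cdf μ (quantile μ u) := by
    refine ge_of_tendsto (((cdf μ).right_continuous _).mono Ioi_subset_Ici_self).tendsto ?_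
    filter_upwards [self_mem_nhdsWithin] with y hy
    obtain ⟨z, hz, hzy⟩ := exists_lt_of_csInf_lt hne hy
    exact hz.trans (monotone_cdf μ hzy.le)
  exact ⟨fun h => hcdf.trans (monotone_cdf μ h), fun h => csInf_le hbdd h⟩

lemma monotoneOn_quantile : MonotoneOn (quantile μ) (Ioo 0 1) := fun _ hu _ hv huv =>
  (quantile_le_iff hu _).2 (huv.trans ((quantile_le_iff hv _).1 le_rfl))

lemma map_quantile [IsProbabilityMeasure μ] :
    (volume.restrict (Ioo 0 1)).map (quantile μ) = μ := by
  have hQ := aemeasurable_restrict_of_monotoneOn (μ := volume) measurableSet_Ioo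
    (monotoneOn_quantile (μ := μ))
  refine Measure.ext_of_Iic _ _ fun z => ?_
  rw [Measure.map_apply_of_aemeasurable hQ measurableSet_Iic, ← ofReal_cdf,
    ← volume_restrict_Ioo_Iic (cdf_le_one μ z)]
  refine measure_congr ((ae_restrict_mem measurableSet_Ioo).mono fun u hu => ?_)
  exact propext (quantile_le_iff hu z)

lemma aemeasurable_quantile : AEMeasurable (quantile μ) (volume.restrict (Ioo 0 1)) :=
  aemeasurable_restrict_of_monotoneOn measurableSet_Ioo monotoneOn_quantile

lemma cdf_quantile [IsProbabilityMeasure μ] [NullSingletonClass μ] {u : ℝ} (hu : u ∈ Ioo 0 1) :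
    cdf μ (quantile μ u) = u := by
  refine le_antisymm ?_ ((quantile_le_iff hu _).1 le_rfl)
  refine le_of_tendsto (continuous_cdf.continuousAt.tendsto.mono_left
    (nhdsWithin_le_nhds (s := Iio (quantile μ u)))) ?_
  filter_upwards [self_mem_nhdsWithin] with y hy
  exact le_of_lt (not_le.1 fun h => (not_le.2 hy) ((quantile_le_iff hu y).2 h))

lemma map_cdf [IsProbabilityMeasure μ] [NullSingletonClass μ] :
    μ.map (cdf μ) = volume.restrict (Ioo 0 1) := by
  calc μ.map (cdf μ) = ((volume.restrict (Ioo 0 1)).map (quantile μ)).map (cdf μ) := by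
        rw [map_quantile]
    _ = (volume.restrict (Ioo 0 1)).map id := by
        rw [AEMeasurable.map_map_of_aemeasurable (monotone_cdf μ).measurable.aemeasurable
          aemeasurable_quantile]
        exact Measure.map_congr ((ae_restrict_mem measurableSet_Ioo).mono fun u hu =>
          cdf_quantile hu)
    _ = volume.restrict (Ioo 0 1) := Measure.map_id

lemma measure_setOf_cdf_le_le [IsProbabilityMeasure μ] [NullSingletonClass μ] (c : ℝ) :
    μ {x | cdf μ x ≤ c} ≤ ENNReal.ofReal c := by
  calc μ {x | cdf μ x ≤ c} = (μ.map (cdf μ)) (Iic c) :=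
        (Measure.map_apply (monotone_cdf μ).measurable measurableSet_Iic).symm
    _ ≤ ENNReal.ofReal c := by rw [map_cdf]; exact volume_restrict_Ioo_Iic_le c

noncomputable def quantileShift (μ : Measure ℝ) (e x : ℝ) : ℝ :=
  quantile μ (toIocMod one_pos 0 (cdf μ x + e))

lemma map_toIocMod_cdf_add [IsProbabilityMeasure μ] [NullSingletonClass μ] (e : ℝ) :
    μ.map (fun x => toIocMod one_pos 0 (cdf μ x + e)) = volume.restrict (Ioo 0 1) := by
  have h := measurePreserving_toIocMod_add e
  rw [← h.map_eq, ← map_cdf (μ := μ), Measure.map_map h.measurable (monotone_cdf μ).measurable]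
  rfl

/-- `quantileShift μ e` is only a.e. measurable, because of the junk values of `quantile`. -/
lemma measurePreserving_quantileShift [IsProbabilityMeasure μ] [NullSingletonClass μ] (e : ℝ) :
    ∃ T, MeasurePreserving T μ μ ∧ T =ᵐ[μ] quantileShift μ e := by
  have hg : Measurable fun x => toIocMod one_pos 0 (cdf μ x + e) :=
    (measurePreserving_toIocMod_add e).measurable.comp (monotone_cdf μ).measurable
  have hQ : AEMeasurable (quantile μ) (μ.map fun x => toIocMod one_pos 0 (cdf μ x + e)) := by
    rw [map_toIocMod_cdf_add]
    exact aemeasurable_quantile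
  have hT : AEMeasurable (quantileShift μ e) μ := hQ.comp_measurable hg
  refine ⟨hT.mk, ⟨hT.measurable_mk, ?_⟩, hT.ae_eq_mk.symm⟩
  rw [← Measure.map_congr hT.ae_eq_mk]
  change μ.map (quantile μ ∘ fun x => toIocMod one_pos 0 (cdf μ x + e)) = μ
  rw [← AEMeasurable.map_map_of_aemeasurable hQ hg.aemeasurable, map_toIocMod_cdf_add, map_quantile]

lemma quantileShift_neg_lt [IsProbabilityMeasure μ] [NullSingletonClass μ] {e x : ℝ}
    (he : 0 < e) (hx : e < cdf μ x) : quantileShift μ (-e) x < x := by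
  have hmem : cdf μ x - e ∈ Ioo 0 1 := ⟨sub_pos.2 hx, by linarith [cdf_le_one μ x]⟩
  have hrot : toIocMod one_pos 0 (cdf μ x + -e) = cdf μ x - e := by
    rw [← sub_eq_add_neg, toIocMod_eq_self, zero_add]
    exact Ioo_subset_Ioc_self hmem
  have hev : ∀ᶠ y in 𝓝[<] x, cdf μ x - e < cdf μ y :=
    (continuous_cdf.continuousAt.tendsto.mono_left nhdsWithin_le_nhds).eventually
      (lt_mem_nhds (sub_lt_self _ he))
  obtain ⟨y, hy, hyx⟩ := (hev.and self_mem_nhdsWithin).exists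
  rw [quantileShift, hrot]
  exact ((quantile_le_iff hmem y).2 hy.le).trans_lt hyx

lemma exists_measurePreserving_lt_of_nullSingletonClass [IsProbabilityMeasure μ]
    [NullSingletonClass μ] {ε : ℝ} (hε : 0 < ε) :
    ∃ T, MeasurePreserving T μ μ ∧ μ {x | x ≤ T x} ≤ ENNReal.ofReal ε := by
  obtain ⟨T, hT, hTeq⟩ := measurePreserving_quantileShift (μ := μ) (-ε)
  refine ⟨T, hT, ?_⟩
  calc μ {x | x ≤ T x} = μ {x | x ≤ quantileShift μ (-ε) x} :=
        measure_congr (hTeq.mono fun x hx =>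
          show (x ≤ T x) = (x ≤ quantileShift μ (-ε) x) by rw [hx])
    _ ≤ μ {x | cdf μ x ≤ ε} := measure_mono fun x hx =>
        le_of_not_gt fun h => (quantileShift_neg_lt hε h).not_ge hx
    _ ≤ ENNReal.ofReal ε := measure_setOf_cdf_le_le ε

lemma exists_measurePreserving_lt [IsProbabilityMeasure μ] {ε : ℝ} (hε : 0 < ε) :
    ∃ T, MeasurePreserving T μ μ ∧ (∀ x, μ {x} ≠ 0 → T x = x) ∧
      μ {x | x ≤ T x ∧ μ {x} = 0} ≤ ENNReal.ofReal ε := by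
  classical
  set D := {x | μ {x} ≠ 0}
  have hD : MeasurableSet D := countable_setOf_measure_singleton_ne_zero.measurableSet
  by_cases h0 : μ Dᶜ = 0
  · refine ⟨id, MeasurePreserving.id μ, fun _ _ => rfl, ?_⟩
    rw [measure_mono_null (fun x hx => not_not.2 hx.2) h0]
    exact zero_le
  have := cond_isProbabilityMeasure (μ := μ) h0
  have : NullSingletonClass μ[|Dᶜ] := ⟨fun x => by
    rw [cond_apply hD.compl]
    by_cases hx : μ {x} = 0
    · rw [measure_mono_null inter_subset_right hx, mul_zero]
    · rw [inter_singleton_eq_empty.2 (not_not.2 hx), measure_empty, mul_zero]⟩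
  obtain ⟨T, hT, hTε⟩ := exists_measurePreserving_lt_of_nullSingletonClass (μ := μ[|Dᶜ]) hε
  refine ⟨D.piecewise id T, measurePreserving_piecewise_id hD hT,
    fun x hx => piecewise_eq_of_mem _ _ _ hx, ?_⟩
  have hset : {x | x ≤ D.piecewise id T x ∧ μ {x} = 0} = Dᶜ ∩ {x | x ≤ T x} := by
    ext x
    by_cases hx : μ {x} = 0
    · simp [D, hx, piecewise_eq_of_notMem]
    · simp [D, hx]
  calc μ {x | x ≤ D.piecewise id T x ∧ μ {x} = 0} = μ[{x | x ≤ T x}|Dᶜ] * μ Dᶜ := by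
        rw [hset, cond_mul_eq_inter hD.compl]
    _ ≤ ENNReal.ofReal ε := mul_le_of_le_one_right' prob_le_one |>.trans hTε

end Quantile

section RandomVariables

variable {Ω : Type*} [MeasurableSpace Ω] {P : Measure Ω} [IsProbabilityMeasure P] {V W X : Ω → ℝ}

lemma cdf_map_apply (hX : Measurable X) (z : ℝ) :
    cdf (P.map X) z = (P {ω | X ω ≤ z}).toReal := by
  have := Measure.isProbabilityMeasure_map (μ := P) hX.aemeasurable
  rw [cdf_eq_real, map_measureReal_apply hX measurableSet_Iic]
  rfl

lemma ae_measure_preimage_singleton_eq_zero_of_eq (hV : Measurable V) (hW : Measurable W)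
    (hcont : Continuous (cdf (P.map W)) ∨ Continuous (cdf (P.map V))) :
    ∀ᵐ ω ∂P, V ω = W ω → P (V ⁻¹' {V ω}) = 0 := by
  have : IsProbabilityMeasure (P.map V) := Measure.isProbabilityMeasure_map hV.aemeasurable
  have : IsProbabilityMeasure (P.map W) := Measure.isProbabilityMeasure_map hW.aemeasurable
  have hatom : ∀ x, P (V ⁻¹' {x}) = P.map V {x} := fun x =>
    (Measure.map_apply hV (measurableSet_singleton x)).symm
  rcases hcont with hFW | hFV
  · have : NullSingletonClass (P.map W) := ⟨fun c =>
      (measure_singleton_eq_zero_iff_continuousAt_cdf c).2 hFW.continuousAt⟩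
    have hnull : P (W ⁻¹' {x | P.map V {x} ≠ 0}) = 0 := nonpos_iff_eq_zero.1 <|
      (Measure.le_map_apply hW.aemeasurable _).trans_eq
        (countable_setOf_measure_singleton_ne_zero.measure_zero _)
    filter_upwards [measure_eq_zero_iff_ae_notMem.1 hnull] with ω hω heq
    rw [hatom, heq]
    exact not_not.1 hω
  · exact Eventually.of_forall fun ω _ => by
      rw [hatom]
      exact (measure_singleton_eq_zero_iff_continuousAt_cdf _).2 hFV.continuousAt

lemma exists_identDistrib_lt (hV : Measurable V)
    (hVW : ∀ᵐ ω ∂P, V ω = W ω → P (V ⁻¹' {V ω}) = 0) {ε : ℝ} (hε : 0 < ε) :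
    ∃ V' : Ω → ℝ, Measurable V' ∧ IdentDistrib V' V P P ∧
      P.real {ω | V ω ≤ W ω} ≤ P.real {ω | V' ω < W ω} + ε ∧
      P.real {ω | W ω ≤ V' ω} ≤ P.real {ω | W ω < V ω} + ε := by
  have : IsProbabilityMeasure (P.map V) := Measure.isProbabilityMeasure_map hV.aemeasurable
  obtain ⟨T, hT, hfix, hTε⟩ := exists_measurePreserving_lt (μ := P.map V) hε
  set B := V ⁻¹' {x | x ≤ T x ∧ P.map V {x} = 0}
  have hB : P B ≤ ENNReal.ofReal ε := (Measure.le_map_apply hV.aemeasurable _).trans hTε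
  have key : ∀ᵐ ω ∂P, T (V ω) < V ω ∨ ω ∈ B ∨ (T (V ω) = V ω ∧ V ω ≠ W ω) := by
    filter_upwards [hVW] with ω hω
    rcases lt_or_ge (T (V ω)) (V ω) with h | h
    · exact Or.inl h
    by_cases hatom : P.map V {V ω} = 0
    · exact Or.inr (Or.inl ⟨h, hatom⟩)
    refine Or.inr (Or.inr ⟨hfix _ hatom, fun heq => hatom ?_⟩)
    rw [Measure.map_apply hV (measurableSet_singleton _)]
    exact hω heq
  have hTV : Measurable (T ∘ V) := hT.measurable.comp hV
  refine ⟨T ∘ V, hTV, ⟨hTV.aemeasurable, hV.aemeasurable, ?_⟩, ?_, ?_⟩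
  · rw [← Measure.map_map hT.measurable hV, hT.map_eq]
  · refine measureReal_le_add_of_ae_le_union (key.mono fun ω hω (hle : V ω ≤ W ω) => ?_) hε.le hB
    rcases hω with h | h | ⟨heq, hne⟩
    · exact Or.inl (h.trans_le hle : T (V ω) < W ω)
    · exact Or.inr h
    · exact Or.inl (show T (V ω) < W ω by rw [heq]; exact lt_of_le_of_ne hle hne)
  · refine measureReal_le_add_of_ae_le_union (key.mono fun ω hω (hle : W ω ≤ T (V ω)) => ?_)
      hε.le hB
    rcases hω with h | h | ⟨heq, hne⟩
    · exact Or.inl (hle.trans_lt h)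
    · exact Or.inr h
    · exact Or.inl (show W ω < V ω from lt_of_le_of_ne (heq ▸ hle) hne.symm)

lemma exists_identDistrib_gt (hV : Measurable V)
    (hVW : ∀ᵐ ω ∂P, V ω = W ω → P (V ⁻¹' {V ω}) = 0) {ε : ℝ} (hε : 0 < ε) :
    ∃ V' : Ω → ℝ, Measurable V' ∧ IdentDistrib V' V P P ∧
      P.real {ω | V' ω ≤ W ω} ≤ P.real {ω | V ω < W ω} + ε := by
  have hVW' : ∀ᵐ ω ∂P, -V ω = -W ω → P ((fun ω => -V ω) ⁻¹' {-V ω}) = 0 := by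
    filter_upwards [hVW] with ω hω heq
    simpa [preimage] using hω (neg_inj.1 heq)
  obtain ⟨V', hV', hident, -, hle⟩ := exists_identDistrib_lt hV.neg hVW' hε
  have hneg : Neg.neg ∘ (-V) = V := by ext; simp
  refine ⟨fun ω => -V' ω, hV'.neg, hneg ▸ hident.comp measurable_neg, ?_⟩
  have h1 : {ω | -V' ω ≤ W ω} = {ω | -W ω ≤ V' ω} := Set.ext fun ω =>
    show -V' ω ≤ W ω ↔ -W ω ≤ V' ω from neg_le
  have h2 : {ω | V ω < W ω} = {ω | -W ω < -V ω} := Set.ext fun ω =>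
    show V ω < W ω ↔ -W ω < -V ω from neg_lt_neg_iff.symm
  rwa [h1, h2]

end RandomVariables

end ProbabilityTheory

theorem strict_nonstrict_sup_inf_eq_general {Ω : Type*} [MeasurableSpace Ω]
    (P : Measure Ω) [IsProbabilityMeasure P]
    (W : Ω → ℝ) (hW : Measurable W)
    (FW : ℝ → ℝ) (hFW : FW = fun z => (P {ω | W ω ≤ z}).toReal)
    (FV : ℝ → ℝ)
    (hcont : Continuous FW ∨ Continuous FV) :
    (sSup {p : ℝ | ∃ V : Ω → ℝ, Measurable V ∧ (∀ z : ℝ, (P {ω | V ω ≤ z}).toReal = FV z) ∧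
          p = (P {ω | V ω ≤ W ω}).toReal}
        = sSup {p : ℝ | ∃ V : Ω → ℝ, Measurable V ∧ (∀ z : ℝ, (P {ω | V ω ≤ z}).toReal = FV z) ∧
          p = (P {ω | V ω < W ω}).toReal}) ∧
    (sInf {p : ℝ | ∃ V : Ω → ℝ, Measurable V ∧ (∀ z : ℝ, (P {ω | V ω ≤ z}).toReal = FV z) ∧
          p = (P {ω | W ω < V ω}).toReal}
        = sInf {p : ℝ | ∃ V : Ω → ℝ, Measurable V ∧ (∀ z : ℝ, (P {ω | V ω ≤ z}).toReal = FV z) ∧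
          p = (P {ω | W ω ≤ V ω}).toReal}) ∧
    (sInf {p : ℝ | ∃ V : Ω → ℝ, Measurable V ∧ (∀ z : ℝ, (P {ω | V ω ≤ z}).toReal = FV z) ∧
          p = (P {ω | V ω < W ω}).toReal}
        = sInf {p : ℝ | ∃ V : Ω → ℝ, Measurable V ∧ (∀ z : ℝ, (P {ω | V ω ≤ z}).toReal = FV z) ∧
          p = (P {ω | V ω ≤ W ω}).toReal}) := by
  set S := {V : Ω → ℝ | Measurable V ∧ ∀ z, (P {ω | V ω ≤ z}).toReal = FV z}
  have himage (F : (Ω → ℝ) → ℝ) : {p : ℝ | ∃ V : Ω → ℝ, Measurable V ∧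
      (∀ z : ℝ, (P {ω | V ω ≤ z}).toReal = FV z) ∧ p = F V} = F '' S :=
    Set.ext fun _ => ⟨fun ⟨V, hV, hF, hp⟩ => ⟨V, ⟨hV, hF⟩, hp.symm⟩,
      fun ⟨V, ⟨hV, hF⟩, hp⟩ => ⟨V, hV, hF, hp.symm⟩⟩
  have hnull : ∀ V ∈ S, ∀ᵐ ω ∂P, V ω = W ω → P (V ⁻¹' {V ω}) = 0 := fun V hV =>
    ae_measure_preimage_singleton_eq_zero_of_eq hV.1 hW <| by
      rwa [funext (cdf_map_apply hW), funext (cdf_map_apply hV.1), ← hFW, funext hV.2]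
  have hmem {V V' : Ω → ℝ} (hV : V ∈ S) (hV' : Measurable V') (h : IdentDistrib V' V P P) :
      V' ∈ S :=
    ⟨hV', fun z => (congrArg ENNReal.toReal (h.measure_mem_eq measurableSet_Iic)).trans (hV.2 z)⟩
  have hlt {a b : Ω → ℝ} : P.real {ω | a ω < b ω} ≤ P.real {ω | a ω ≤ b ω} :=
    measureReal_mono (ofPred_subset_ofPred.2 fun _ => le_of_lt)
  have hbdd (F : (Ω → ℝ) → Set Ω) : BddAbove ((fun V => P.real (F V)) '' S) :=
    ⟨1, forall_mem_image.2 fun _ _ => measureReal_le_one⟩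
  have hbdd' (F : (Ω → ℝ) → Set Ω) : BddBelow ((fun V => P.real (F V)) '' S) :=
    ⟨0, forall_mem_image.2 fun _ _ => measureReal_nonneg⟩
  simp only [himage]
  refine ⟨csSup_image_eq_of_forall_le_add (hbdd _) (fun _ _ => hlt) fun V hV ε hε => ?_,
    csInf_image_eq_of_forall_le_add (hbdd' _) (fun _ _ => hlt) fun V hV ε hε => ?_,
    csInf_image_eq_of_forall_le_add (hbdd' _) (fun _ _ => hlt) fun V hV ε hε => ?_⟩
  · obtain ⟨V', hV', hident, h, -⟩ := exists_identDistrib_lt hV.1 (hnull V hV) hε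
    exact ⟨V', hmem hV hV' hident, h⟩
  · obtain ⟨V', hV', hident, -, h⟩ := exists_identDistrib_lt hV.1 (hnull V hV) hε
    exact ⟨V', hmem hV hV' hident, h⟩
  · obtain ⟨V', hV', hident, h⟩ := exists_identDistrib_gt hV.1 (hnull V hV) hε
    exact ⟨V', hmem hV hV' hident, h⟩

/-- On an atomless probability space, for a random variable `W` with cdf
`F_W` and a cdf `F_V` on `ℝ` with at least one of them continuous, over random variables `V`
with cdf `F_V`: (i) `sup_V ℙ(W ≥ V) = sup_V ℙ(W > V)`; (ii) `inf_V ℙ(W < V) = inf_V ℙ(W ≤ V)`;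
(iii) `inf_V ℙ(W > V) = inf_V ℙ(W ≥ V)`. -/
theorem strict_nonstrict_sup_inf_eq {Ω : Type*} [MeasurableSpace Ω]
    (P : Measure Ω) [IsProbabilityMeasure P] (hatomless : Atomless P)
    (W : Ω → ℝ) (hW : Measurable W)
    (FW : ℝ → ℝ) (hFW : FW = fun z => (P {ω | W ω ≤ z}).toReal)
    (FV : ℝ → ℝ) (hFVmono : Monotone FV)
    (hFVrc : ∀ x : ℝ, Tendsto FV (𝓝[>] x) (𝓝 (FV x)))
    (hFVbot : Tendsto FV atBot (𝓝 0)) (hFVtop : Tendsto FV atTop (𝓝 1))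
    (hcont : Continuous FW ∨ Continuous FV) :
    (sSup {p : ℝ | ∃ V : Ω → ℝ, Measurable V ∧ (∀ z : ℝ, (P {ω | V ω ≤ z}).toReal = FV z) ∧
          p = (P {ω | V ω ≤ W ω}).toReal}
        = sSup {p : ℝ | ∃ V : Ω → ℝ, Measurable V ∧ (∀ z : ℝ, (P {ω | V ω ≤ z}).toReal = FV z) ∧
          p = (P {ω | V ω < W ω}).toReal}) ∧
    (sInf {p : ℝ | ∃ V : Ω → ℝ, Measurable V ∧ (∀ z : ℝ, (P {ω | V ω ≤ z}).toReal = FV z) ∧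
          p = (P {ω | W ω < V ω}).toReal}
        = sInf {p : ℝ | ∃ V : Ω → ℝ, Measurable V ∧ (∀ z : ℝ, (P {ω | V ω ≤ z}).toReal = FV z) ∧
          p = (P {ω | W ω ≤ V ω}).toReal}) ∧
    (sInf {p : ℝ | ∃ V : Ω → ℝ, Measurable V ∧ (∀ z : ℝ, (P {ω | V ω ≤ z}).toReal = FV z) ∧
          p = (P {ω | V ω < W ω}).toReal}
        = sInf {p : ℝ | ∃ V : Ω → ℝ, Measurable V ∧ (∀ z : ℝ, (P {ω | V ω ≤ z}).toReal = FV z) ∧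
          p = (P {ω | V ω ≤ W ω}).toReal}) :=
  strict_nonstrict_sup_inf_eq_general P W hW FW hFW FV hcont
end

section
/- Let X be a real-valued random variable with cdf F_X and quantile function F_X^{-1}, and let F₁ be a continuous cdf on ℝ, extended by F₁(+∞) := 1. Then sup_{z∈ℝ} ( F₁(z) − F_X(z) ) = sup_{t∈(0,1]} ( F₁(F_X^{-1}(t)) − t ). -/
open MeasureTheory Filter Topology

/-- The (generalized, extended-real-valued) quantile function of a distribution function
`F : ℝ → ℝ`: `F⁻¹(t) = inf {z ∈ ℝ : F(z) ≥ t}`, with the convention `inf ∅ = +∞`. -/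
noncomputable def quantileE (F : ℝ → ℝ) (t : ℝ) : EReal :=
  sInf {y : EReal | ∃ x : ℝ, y = (x : EReal) ∧ t ≤ F x}

/-- Extension of a cdf `F₁ : ℝ → ℝ` to the extended reals, with `F₁(+∞) := 1`
(and `F₁(−∞) := 0`). -/
noncomputable def extendCdf (F : ℝ → ℝ) : EReal → ℝ := fun w =>
  if w = ⊤ then 1 else if w = ⊥ then 0 else F w.toReal

/-!
For a monotone `F`, `F(z) < t` forces `z ≤ F⁻¹(t)` and `z < F⁻¹(t)` forces `F(z) < t`.
Taking `t` just above `F_X(z)` gives `F₁(z) - F_X(z) ≤ F₁(F_X⁻¹(t)) - t + (t - F_X(z))`,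
while every `z < F_X⁻¹(t)` satisfies `F₁(z) - t ≤ F₁(z) - F_X(z)`, and letting `z ↑ F_X⁻¹(t)`
(left continuity of `F₁`, or `F₁ → 1` when `F_X⁻¹(t) = +∞`) bounds the right-hand supremum by
the left one. When `F_X(z) = 1` no `t` is available; there `F₁(z) - F_X(z) ≤ 0`, and the
right-hand supremum is `≥ 0` by letting `t ↓ 0`.
-/

open Set

lemma le_of_forall_mem_Ioo_le {α : Type*} [LinearOrder α] [DenselyOrdered α] {a b c : α}
    (hab : a < b) (h : ∀ t ∈ Ioo a b, c ≤ t) : c ≤ a :=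
  le_of_forall_gt_imp_ge_of_dense fun t hat => by
    obtain ⟨s, has, hs⟩ := exists_between (lt_min hat hab)
    exact (h s ⟨has, hs.trans_le (min_le_right _ _)⟩).trans (hs.le.trans (min_le_left _ _))

section Quantile

variable {F : ℝ → ℝ} {t z : ℝ}

lemma coe_le_quantileE (hF : Monotone F) (h : F z < t) : (z : EReal) ≤ quantileE F t :=
  le_sInf fun _ ⟨_, hy, hx⟩ => hy ▸ EReal.coe_le_coe_iff.2 (hF.reflect_lt (h.trans_le hx)).le

lemma quantileE_le_coe (h : t ≤ F z) : quantileE F t ≤ z :=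
  sInf_le ⟨z, rfl, h⟩

lemma lt_of_coe_lt_quantileE (h : (z : EReal) < quantileE F t) : F z < t :=
  lt_of_not_ge fun h' => (quantileE_le_coe h').not_gt h

lemma quantileE_ne_bot (hF : Monotone F) (hF_bot : Tendsto F atBot (𝓝 0)) (ht : 0 < t) :
    quantileE F t ≠ ⊥ := by
  obtain ⟨z, hz⟩ := (hF_bot.eventually (eventually_lt_nhds ht)).exists
  exact ne_bot_of_le_ne_bot (EReal.coe_ne_bot z) (coe_le_quantileE hF hz)

end Quantile

section ExtendCdf

variable {F : ℝ → ℝ}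

@[simp]
lemma extendCdf_coe (x : ℝ) : extendCdf F x = F x := by
  simp [extendCdf]

@[simp]
lemma extendCdf_top : extendCdf F ⊤ = 1 := by
  simp [extendCdf]

@[simp]
lemma extendCdf_bot : extendCdf F ⊥ = 0 := by
  simp [extendCdf]

lemma extendCdf_nonneg (hF : ∀ x, 0 ≤ F x) (w : EReal) : 0 ≤ extendCdf F w := by
  induction w using EReal.rec <;> simp [hF]

lemma extendCdf_le_one (hF : ∀ x, F x ≤ 1) (w : EReal) : extendCdf F w ≤ 1 := by
  induction w using EReal.rec <;> simp [hF]

lemma le_extendCdf_of_coe_le (hF : Monotone F) (hF_le : ∀ x, F x ≤ 1) {z : ℝ} {w : EReal}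
    (h : (z : EReal) ≤ w) : F z ≤ extendCdf F w := by
  induction w using EReal.rec with
  | bot => exact absurd h (by simp)
  | coe r => simpa using hF (EReal.coe_le_coe_iff.1 h)
  | top => simpa using hF_le z

lemma extendCdf_le_of_forall_coe_lt (hF : Continuous F) (hF_top : Tendsto F atTop (𝓝 1))
    {w : EReal} (hw : w ≠ ⊥) {c : ℝ} (h : ∀ z : ℝ, (z : EReal) < w → F z ≤ c) :
    extendCdf F w ≤ c := by
  induction w using EReal.rec with
  | bot => exact absurd rfl hw
  | coe r =>
    rw [extendCdf_coe]
    refine le_of_tendsto (hF.continuousWithinAt (s := Iio r)) ?_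
    filter_upwards [self_mem_nhdsWithin] with z hz using h z (EReal.coe_lt_coe_iff.2 hz)
  | top =>
    rw [extendCdf_top]
    exact le_of_tendsto hF_top (Eventually.of_forall fun z => h z (EReal.coe_lt_top z))

end ExtendCdf

section Supremum

variable {F F₁ : ℝ → ℝ}

lemma iSup_sub_le_iSup_extendCdf_quantileE_sub (hF : Monotone F) (hF_nonneg : ∀ x, 0 ≤ F x)
    (hF₁ : Monotone F₁) (hF₁_nonneg : ∀ x, 0 ≤ F₁ x) (hF₁_le : ∀ x, F₁ x ≤ 1) :
    ⨆ z, F₁ z - F z ≤ ⨆ t : Ioc (0 : ℝ) 1, extendCdf F₁ (quantileE F t) - t := by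
  set B := ⨆ t : Ioc (0 : ℝ) 1, extendCdf F₁ (quantileE F t) - t
  have hB : BddAbove (range fun t : Ioc (0 : ℝ) 1 => extendCdf F₁ (quantileE F t) - t) :=
    ⟨1, by rintro _ ⟨t, rfl⟩; linarith [extendCdf_le_one hF₁_le (quantileE F t), t.2.1]⟩
  have le_B : ∀ t ∈ Ioc (0 : ℝ) 1, extendCdf F₁ (quantileE F t) - t ≤ B := fun t ht =>
    le_ciSup hB (⟨t, ht⟩ : Ioc (0 : ℝ) 1)
  have hB_nonneg : 0 ≤ B := by
    have := le_of_forall_mem_Ioo_le zero_lt_one (c := -B) fun t ht => by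
      linarith [le_B t (Ioo_subset_Ioc_self ht), extendCdf_nonneg hF₁_nonneg (quantileE F t)]
    linarith
  refine ciSup_le fun z => ?_
  rcases lt_or_ge (F z) 1 with hz | hz
  · have := le_of_forall_mem_Ioo_le hz (c := F₁ z - B) fun t ht => by
      have := le_B t ⟨(hF_nonneg z).trans_lt ht.1, ht.2.le⟩
      linarith [le_extendCdf_of_coe_le hF₁ hF₁_le (coe_le_quantileE hF ht.1)]
    linarith
  · linarith [hF₁_le z]

lemma iSup_extendCdf_quantileE_sub_le_iSup_sub (hF : Monotone F) (hF_bot : Tendsto F atBot (𝓝 0))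
    (hF₁ : Continuous F₁) (hF₁_le : ∀ x, F₁ x ≤ 1) (hF₁_top : Tendsto F₁ atTop (𝓝 1)) :
    ⨆ t : Ioc (0 : ℝ) 1, extendCdf F₁ (quantileE F t) - t ≤ ⨆ z, F₁ z - F z := by
  have hA : BddAbove (range fun z => F₁ z - F z) :=
    ⟨1, by rintro _ ⟨z, rfl⟩; linarith [hF₁_le z, hF.le_of_tendsto hF_bot z]⟩
  refine ciSup_le fun t => ?_
  have := extendCdf_le_of_forall_coe_lt hF₁ hF₁_top (quantileE_ne_bot hF hF_bot t.2.1)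
    (c := (⨆ z, F₁ z - F z) + t) fun z hz => by
      linarith [le_ciSup hA z, lt_of_coe_lt_quantileE hz]
  linarith

theorem iSup_sub_eq_iSup_extendCdf_quantileE_sub (hF : Monotone F)
    (hF_bot : Tendsto F atBot (𝓝 0)) (hF₁ : Monotone F₁) (hF₁_cont : Continuous F₁)
    (hF₁_bot : Tendsto F₁ atBot (𝓝 0)) (hF₁_top : Tendsto F₁ atTop (𝓝 1)) :
    ⨆ z, F₁ z - F z = ⨆ t : Ioc (0 : ℝ) 1, extendCdf F₁ (quantileE F t) - t :=
  le_antisymm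
    (iSup_sub_le_iSup_extendCdf_quantileE_sub hF (hF.le_of_tendsto hF_bot) hF₁
      (hF₁.le_of_tendsto hF₁_bot) (hF₁.ge_of_tendsto hF₁_top))
    (iSup_extendCdf_quantileE_sub_le_iSup_sub hF hF_bot hF₁_cont (hF₁.ge_of_tendsto hF₁_top)
      hF₁_top)

end Supremum

/-- For a random variable `X` with cdf `F_X` and quantile function `F_X⁻¹`,
and a continuous cdf `F₁` on `ℝ` extended by `F₁(+∞) := 1`,
`sup_{z∈ℝ} (F₁(z) − F_X(z)) = sup_{t∈(0,1]} (F₁(F_X⁻¹(t)) − t)`. -/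
theorem sup_cdf_eq_sup_quantile {Ω : Type*} [MeasurableSpace Ω]
    (P : Measure Ω) [IsProbabilityMeasure P]
    (X : Ω → ℝ) (hX : Measurable X)
    (FX : ℝ → ℝ) (hFX : FX = fun z => (P {ω | X ω ≤ z}).toReal)
    (F₁ : ℝ → ℝ) (hF₁mono : Monotone F₁) (hF₁cont : Continuous F₁)
    (hF₁bot : Tendsto F₁ atBot (𝓝 0)) (hF₁top : Tendsto F₁ atTop (𝓝 1)) :
    (⨆ z : ℝ, (F₁ z - FX z))
      = ⨆ t : Set.Ioc (0 : ℝ) 1, (extendCdf F₁ (quantileE FX (t : ℝ)) - (t : ℝ)) := by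
  have : IsProbabilityMeasure (P.map X) := Measure.isProbabilityMeasure_map hX.aemeasurable
  have hFX_cdf : FX = ProbabilityTheory.cdf (P.map X) := by
    ext z
    rw [hFX, ProbabilityTheory.cdf_eq_real, measureReal_def, Measure.map_apply hX measurableSet_Iic]
    rfl
  subst hFX_cdf
  exact iSup_sub_eq_iSup_extendCdf_quantileE_sub (ProbabilityTheory.monotone_cdf _)
    (ProbabilityTheory.tendsto_cdf_atBot _) hF₁mono hF₁cont hF₁bot hF₁top
end

section
/- Let ρ be a real-valued random variable with ℙ(ρ > 0) = 1, continuous cdf F_ρ, and finite mean (i.e., ∫_0^1 F_ρ^{-1}(s) ds < ∞), let F₁ be a continuous cdf on ℝ, and let x₀ > 0. Consider the problem of maximizing sup_{t∈(0,1]} ( F₁(G(t)) − t ) over all increasing, left-continuous functions G : (0,1] → [0,∞) satisfying the budget constraint ∫_0^1 G(t) F_ρ^{-1}(1−t) dt ≤ x₀. Then: (a) the function r ↦ F₁( x₀ / ∫_r^1 F_ρ^{-1}(1−s) ds ) − r attains its supremum over [0,1) at some r* ∈ [0,1); and (b) setting κ* = x₀ / ∫_{r*}^1 F_ρ^{-1}(1−s)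 ds, the function G*(t) = κ*·1_{{t > r*}} is feasible for the problem and is optimal, i.e., for every feasible G, sup_{t∈(0,1]} ( F₁(G(t)) − t ) ≤ sup_{t∈(0,1]} ( F₁(G*(t)) − t ). -/
open MeasureTheory Filter Topology

/-!
A feasible `G` is monotone, so on `(t, 1]` it is at least `G t`, and the budget constraint gives
`G t · ∫_t^1 F_ρ⁻¹(1-s) ds ≤ x₀`. Hence `F₁(G t) - t` never exceeds the objective
`r ↦ F₁(x₀ / ∫_r^1 F_ρ⁻¹(1-s) ds) - r` at `r = t`. The step function `κ*·1_{(r*,1]}` spends the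
whole budget and reaches the objective's value at `r*` in the limit `t ↓ r*`. The objective is
continuous on `[0,1)` (the integral is positive there since `ρ > 0` a.s.) and tends to `0` as
`r → 1`, which is below its value at `0`; so it attains its supremum.
-/

open Set ProbabilityTheory

lemma realQuantile_zero_of_nonneg {F : ℝ → ℝ} (hF : ∀ x, 0 ≤ F x) : realQuantile F 0 = 0 := by
  have huniv : {x : ℝ | 0 ≤ F x} = univ := eq_univ_of_forall hF
  rw [realQuantile, huniv, Real.sInf_of_not_bddBelow not_bddBelow_univ]

lemma lt_realQuantile {F : ℝ → ℝ} (hF : Monotone F) {a u : ℝ}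
    (hcont : ContinuousWithinAt F (Ioi a) a) (ha : F a < u) (hu : ∃ x, u ≤ F x) :
    a < realQuantile F u := by
  obtain ⟨b, hFb, hab⟩ :=
    ((hcont.eventually (gt_mem_nhds ha)).and self_mem_nhdsWithin).exists
  exact hab.trans_le <| le_csInf hu fun x hx => (hF.reflect_lt (hFb.trans_le hx)).le

lemma realQuantile_cdf_pos (μ : Measure ℝ) [IsProbabilityMeasure μ] (hμ : μ (Iic 0) = 0)
    {u : ℝ} (hu₀ : 0 < u) (hu₁ : u < 1) : 0 < realQuantile (cdf μ) u := by
  refine lt_realQuantile (monotone_cdf μ) ((cdf μ).right_continuous 0 |>.mono Ioi_subset_Ici_self)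
    (by simpa [cdf_eq_real, measureReal_def, hμ] using hu₀) ?_
  obtain ⟨x, hx⟩ := ((tendsto_cdf_atTop μ).eventually (lt_mem_nhds hu₁)).exists
  exact ⟨x, hx.le⟩

lemma cdf_map_apply {Ω : Type*} [MeasurableSpace Ω] (P : Measure Ω) [IsProbabilityMeasure P]
    {ρ : Ω → ℝ} (hρ : Measurable ρ) (z : ℝ) :
    cdf (P.map ρ) z = (P {ω | ρ ω ≤ z}).toReal := by
  have := Measure.isProbabilityMeasure_map (μ := P) hρ.aemeasurable
  rw [cdf_eq_real, map_measureReal_apply hρ measurableSet_Iic, measureReal_def]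
  rfl

lemma map_Iic_zero_eq_zero_of_pos {Ω : Type*} [MeasurableSpace Ω] (P : Measure Ω)
    [IsProbabilityMeasure P] {ρ : Ω → ℝ} (hρ : Measurable ρ) (hρpos : P {ω | 0 < ρ ω} = 1) :
    P.map ρ (Iic 0) = 0 := by
  rw [Measure.map_apply hρ measurableSet_Iic]
  have hcompl : ρ ⁻¹' Iic 0 = {ω | 0 < ρ ω}ᶜ := by ext; simp
  rw [hcompl, prob_compl_eq_zero_iff (measurableSet_lt measurable_const hρ), hρpos]

lemma exists_isMaxOn_Ico_of_tendsto {f : ℝ → ℝ} {a b L : ℝ} (hab : a < b)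
    (hf : ContinuousOn f (Ico a b)) (hlim : Tendsto f (𝓝[<] b) (𝓝 L)) (hL : L ≤ f a) :
    ∃ c ∈ Ico a b, IsMaxOn f (Ico a b) c := by
  by_cases h : ∀ x ∈ Ico a b, f x ≤ f a
  · exact ⟨a, left_mem_Ico.2 hab, h⟩
  push Not at h
  obtain ⟨x₁, hx₁, hfx₁⟩ := h
  -- near `b` the values of `f` stay below `f x₁`, so the maximum is attained on a compact `Icc a c`
  obtain ⟨l, hlb, hl⟩ := mem_nhdsLT_iff_exists_Ioo_subset.1
    (hlim.eventually (gt_mem_nhds (hL.trans_lt hfx₁)))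
  set c := max x₁ l
  have hcb : c < b := max_lt hx₁.2 hlb
  obtain ⟨m, hm, hmax⟩ := isCompact_Icc.exists_isMaxOn
    (nonempty_Icc.2 (hx₁.1.trans (le_max_left x₁ l))) (hf.mono (Icc_subset_Ico_right hcb))
  refine ⟨m, Icc_subset_Ico_right hcb hm, fun y hy => ?_⟩
  rcases le_or_gt y c with hyc | hcy
  · exact hmax ⟨hy.1, hyc⟩
  · have hx₁m : f x₁ ≤ f m := hmax ⟨hx₁.1, le_max_left x₁ l⟩
    exact ((hl ⟨(le_max_right x₁ l).trans_lt hcy, hy.2⟩ : f y < f x₁).le).trans hx₁m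

lemma continuousOn_setIntegral_Ioc_left {g : ℝ → ℝ} {a b : ℝ} (hab : a ≤ b)
    (hg : IntegrableOn g (Ioc a b)) : ContinuousOn (fun r => ∫ s in Ioc r b, g s) (Icc a b) := by
  have hg' : IntegrableOn g (uIcc a b) := by
    rwa [uIcc_of_le hab, integrableOn_Icc_iff_integrableOn_Ioc]
  have hprim := intervalIntegral.continuousOn_primitive_interval_left hg'
  rw [uIcc_of_le hab] at hprim
  exact hprim.congr fun r hr => (intervalIntegral.integral_of_le hr.2).symm

lemma setIntegral_Ioc_pos_of_mem_Ico {g : ℝ → ℝ} {a b r : ℝ} (hg : IntegrableOn g (Ioc a b))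
    (hpos : ∀ s ∈ Ioo a b, 0 < g s) (hr : r ∈ Ico a b) : 0 < ∫ s in Ioc r b, g s := by
  rw [← intervalIntegral.integral_of_le hr.2.le]
  exact intervalIntegral.intervalIntegral_pos_of_pos_on
    ((intervalIntegrable_iff_integrableOn_Ioc_of_le hr.2.le).2
      (hg.mono_set (Ioc_subset_Ioc_left hr.1)))
    (fun s hs => hpos s ⟨hr.1.trans_lt hs.1, hs.2⟩) hr.2

lemma lintegral_ofReal_const_mul_eq {α : Type*} [MeasurableSpace α] {μ : Measure α} {g : α → ℝ}
    {c : ℝ} (hc : 0 ≤ c) (hg : Integrable g μ) (hg0 : 0 ≤ᵐ[μ] g) :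
    ∫⁻ x, ENNReal.ofReal (c * g x) ∂μ = ENNReal.ofReal (c * ∫ x, g x ∂μ) := by
  rw [← integral_const_mul,
    ofReal_integral_eq_lintegral_ofReal (hg.const_mul c) (hg0.mono fun _ hx => mul_nonneg hc hx)]

lemma ofReal_mul_setIntegral_le_lintegral {G g : ℝ → ℝ} {a b t : ℝ} (ht : t ∈ Ioc a b)
    (hGt : 0 ≤ G t) (hG : MonotoneOn G (Ioc a b)) (hg0 : ∀ s ∈ Ioc a b, 0 ≤ g s)
    (hg : IntegrableOn g (Ioc a b)) :
    ENNReal.ofReal (G t * ∫ s in Ioc t b, g s) ≤ ∫⁻ s in Ioc a b, ENNReal.ofReal (G s * g s) := by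
  have hsub : Ioc t b ⊆ Ioc a b := Ioc_subset_Ioc_left ht.1.le
  rw [← lintegral_ofReal_const_mul_eq hGt (hg.mono_set hsub)
    ((ae_restrict_iff' measurableSet_Ioc).2 (ae_of_all _ fun s hs => hg0 s (hsub hs)))]
  calc ∫⁻ s in Ioc t b, ENNReal.ofReal (G t * g s)
      ≤ ∫⁻ s in Ioc t b, ENNReal.ofReal (G s * g s) :=
        setLIntegral_mono' measurableSet_Ioc fun s hs => ENNReal.ofReal_le_ofReal <|
          mul_le_mul_of_nonneg_right (hG ht (hsub hs) hs.1.le) (hg0 s (hsub hs))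
    _ ≤ _ := lintegral_mono_set hsub

lemma lintegral_ofReal_step_mul {g : ℝ → ℝ} {a b r κ : ℝ} (har : a ≤ r) (hκ : 0 ≤ κ)
    (hg0 : ∀ s ∈ Ioc a b, 0 ≤ g s) (hg : IntegrableOn g (Ioc a b)) :
    ∫⁻ t in Ioc a b, ENNReal.ofReal ((if r < t then κ else 0) * g t) =
      ENNReal.ofReal (κ * ∫ s in Ioc r b, g s) := by
  have hsub : Ioc r b ⊆ Ioc a b := Ioc_subset_Ioc_left har
  have hstep : (fun t => ENNReal.ofReal ((if r < t then κ else 0) * g t)) =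
      (Ioi r).indicator fun t => ENNReal.ofReal (κ * g t) := by
    ext t
    by_cases h : r < t <;> simp [h]
  rw [hstep, lintegral_indicator measurableSet_Ioi, Measure.restrict_restrict measurableSet_Ioi,
    inter_comm, Ioc_inter_Ioi, sup_eq_right.2 har]
  exact lintegral_ofReal_const_mul_eq hκ (hg.mono_set hsub)
    ((ae_restrict_iff' measurableSet_Ioc).2 (ae_of_all _ fun s hs => hg0 s (hsub hs)))

lemma sub_le_iSup_Ioc {f : ℝ → ℝ} {a b c r : ℝ} (hr : r ∈ Ico a b)
    (hbdd : BddAbove (range fun t : Ioc a b => f t)) (hf : ∀ t ∈ Ioc r b, c - t ≤ f t) :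
    c - r ≤ ⨆ t : Ioc a b, f t := by
  refine le_of_tendsto (tendsto_nhdsWithin_of_tendsto_nhds (tendsto_const_nhds.sub tendsto_id) :
    Tendsto (fun t => c - t) (𝓝[>] r) (𝓝 (c - r))) ?_
  filter_upwards [Ioc_mem_nhdsGT hr.2] with t ht
  exact (hf t ht).trans (le_ciSup hbdd ⟨t, hr.1.trans_lt ht.1, ht.2⟩)

lemma exists_isMaxOn_objective {g : ℝ → ℝ} (hg : IntegrableOn g (Ioc 0 1))
    (hgpos : ∀ s ∈ Ioo (0 : ℝ) 1, 0 < g s) {F₁ : ℝ → ℝ} (hF₁cont : Continuous F₁)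
    (hF₁nonneg : ∀ x, 0 ≤ F₁ x) (hF₁top : Tendsto F₁ atTop (𝓝 1)) {x₀ : ℝ} (hx₀ : 0 < x₀) :
    ∃ rs ∈ Ico (0 : ℝ) 1,
      IsMaxOn (fun r => F₁ (x₀ / ∫ s in Ioc r 1, g s) - r) (Ico 0 1) rs := by
  set φ := fun r => ∫ s in Ioc r 1, g s
  have hφcont : ContinuousOn φ (Icc 0 1) := continuousOn_setIntegral_Ioc_left zero_le_one hg
  have hφpos : ∀ r ∈ Ico (0 : ℝ) 1, 0 < φ r := fun r =>
    setIntegral_Ioc_pos_of_mem_Ico hg hgpos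
  have hφlim : Tendsto φ (𝓝[<] 1) (𝓝[>] 0) := by
    refine tendsto_nhdsWithin_iff.2 ⟨?_, ?_⟩
    · have h := (hφcont 1 (right_mem_Icc.2 zero_le_one)).mono_left
        (nhdsWithin_mono 1 (Ico_subset_Icc_self : Ico (0 : ℝ) 1 ⊆ Icc 0 1))
      rwa [nhdsWithin_Ico_eq_nhdsLT zero_lt_one, show φ 1 = 0 by simp [φ]] at h
    · filter_upwards [Ico_mem_nhdsLT zero_lt_one] using hφpos
  refine exists_isMaxOn_Ico_of_tendsto (L := 1 - 1) zero_lt_one (fun r hr => ?_) ?_ ?_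
  · exact (hF₁cont.continuousAt.comp_continuousWithinAt (continuousWithinAt_const.div
      ((hφcont r (Ico_subset_Icc_self hr)).mono Ico_subset_Icc_self) (hφpos r hr).ne')).sub
      continuousWithinAt_id
  · have hdiv : Tendsto (fun r => x₀ / φ r) (𝓝[<] 1) atTop := by
      simpa only [div_eq_mul_inv, Function.comp_def] using
        (tendsto_inv_nhdsGT_zero.comp hφlim).const_mul_atTop hx₀
    exact (hF₁top.comp hdiv).sub (tendsto_nhdsWithin_of_tendsto_nhds tendsto_id)
  · simpa using hF₁nonneg _

theorem goal_reaching_solution_of_weight {g : ℝ → ℝ} (hg0 : ∀ s ∈ Ioc (0 : ℝ) 1, 0 ≤ g s)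
    (hgpos : ∀ s ∈ Ioo (0 : ℝ) 1, 0 < g s) (hg : IntegrableOn g (Ioc 0 1))
    {F₁ : ℝ → ℝ} (hF₁mono : Monotone F₁) (hF₁cont : Continuous F₁)
    (hF₁bot : Tendsto F₁ atBot (𝓝 0)) (hF₁top : Tendsto F₁ atTop (𝓝 1)) {x₀ : ℝ} (hx₀ : 0 < x₀) :
    ∃ rs ∈ Ico (0 : ℝ) 1,
      (∀ r ∈ Ico (0 : ℝ) 1,
        F₁ (x₀ / ∫ s in Ioc r 1, g s) - r ≤ F₁ (x₀ / ∫ s in Ioc rs 1, g s) - rs) ∧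
      (∃ κs : ℝ, κs = x₀ / ∫ s in Ioc rs 1, g s ∧
        (∫⁻ t in Ioc (0 : ℝ) 1, ENNReal.ofReal ((if rs < t then κs else 0) * g t)) ≤
          ENNReal.ofReal x₀ ∧
        ∀ G : ℝ → ℝ, (∀ t ∈ Ioc (0 : ℝ) 1, 0 ≤ G t) → MonotoneOn G (Ioc (0 : ℝ) 1) →
          (∫⁻ t in Ioc (0 : ℝ) 1, ENNReal.ofReal (G t * g t)) ≤ ENNReal.ofReal x₀ →
          (⨆ t : Ioc (0 : ℝ) 1, (F₁ (G t) - t)) ≤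
            ⨆ t : Ioc (0 : ℝ) 1, (F₁ (if rs < (t : ℝ) then κs else 0) - t)) := by
  have hF₁nonneg := hF₁mono.le_of_tendsto hF₁bot
  have hF₁le := hF₁mono.ge_of_tendsto hF₁top
  have hφpos : ∀ r ∈ Ico (0 : ℝ) 1, 0 < ∫ s in Ioc r 1, g s := fun r =>
    setIntegral_Ioc_pos_of_mem_Ico hg hgpos
  obtain ⟨rs, hrs, hmax⟩ := exists_isMaxOn_objective hg hgpos hF₁cont hF₁nonneg hF₁top hx₀
  set κs := x₀ / ∫ s in Ioc rs 1, g s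
  refine ⟨rs, hrs, fun r hr => hmax hr, κs, rfl, ?_, fun G hG0 hGmono hbud => ?_⟩
  · rw [lintegral_ofReal_step_mul hrs.1 (div_nonneg hx₀.le (hφpos rs hrs).le) hg0 hg,
      div_mul_cancel₀ x₀ (hφpos rs hrs).ne']
  refine (ciSup_le fun ⟨t, ht⟩ => ?_).trans (sub_le_iSup_Ioc (c := F₁ κs)
    (f := fun t => F₁ (if rs < t then κs else 0) - t) hrs ?_ fun t ht => ?_)
  · rcases ht.2.lt_or_eq with ht1 | rfl
    · have hbound := (ENNReal.ofReal_le_ofReal_iff hx₀.le).1 <|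
        (ofReal_mul_setIntegral_le_lintegral ht (hG0 t ht) hGmono hg0 hg).trans hbud
      have hGt : G t ≤ x₀ / ∫ s in Ioc t 1, g s :=
        (le_div_iff₀ (hφpos t ⟨ht.1.le, ht1⟩)).2 hbound
      exact (sub_le_sub_right (hF₁mono hGt) t).trans (hmax ⟨ht.1.le, ht1⟩)
    · -- at `t = 1` the integral vanishes and the budget says nothing, but `F₁ ≤ 1` suffices
      calc F₁ (G 1) - 1 ≤ F₁ (x₀ / ∫ s in Ioc 0 1, g s) - 0 := by
            linarith [hF₁le (G 1), hF₁nonneg (x₀ / ∫ s in Ioc 0 1, g s)]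
        _ ≤ _ := hmax ⟨le_rfl, zero_lt_one⟩
  · exact ⟨1, forall_mem_range.2 fun t => by
      linarith [hF₁le (if rs < (t : ℝ) then κs else 0), t.2.1]⟩
  · rw [if_pos ht.1]

theorem goal_reaching_quantile_solution_general {Ω : Type*} [MeasurableSpace Ω]
    (P : Measure Ω) [IsProbabilityMeasure P]
    (ρ : Ω → ℝ) (hρ : Measurable ρ) (hρpos : P {ω | 0 < ρ ω} = 1)
    (Fρ : ℝ → ℝ) (hFρ : Fρ = fun z => (P {ω | ρ ω ≤ z}).toReal)
    (hmean : IntegrableOn (fun s => realQuantile Fρ s) (Set.Ioo (0 : ℝ) 1))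
    (F₁ : ℝ → ℝ) (hF₁mono : Monotone F₁) (hF₁cont : Continuous F₁)
    (hF₁bot : Tendsto F₁ atBot (𝓝 0)) (hF₁top : Tendsto F₁ atTop (𝓝 1))
    (x₀ : ℝ) (hx₀ : 0 < x₀) :
    ∃ rs ∈ Set.Ico (0 : ℝ) 1,
      -- (a) `rs` maximizes `r ↦ F₁(x₀ / ∫_r^1 F_ρ⁻¹(1−s) ds) − r` over `[0,1)`
      (∀ r ∈ Set.Ico (0 : ℝ) 1,
        F₁ (x₀ / ∫ s in Set.Ioc r 1, realQuantile Fρ (1 - s)) - r ≤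
          F₁ (x₀ / ∫ s in Set.Ioc rs 1, realQuantile Fρ (1 - s)) - rs) ∧
      -- (b) with `κ* = x₀ / ∫_{rs}^1 F_ρ⁻¹(1−s) ds`, `G* = κ*·1_{(rs,1]}` is feasible…
      (∃ κs : ℝ, κs = x₀ / ∫ s in Set.Ioc rs 1, realQuantile Fρ (1 - s) ∧
        (∫⁻ t in Set.Ioc (0 : ℝ) 1,
            ENNReal.ofReal ((if rs < t then κs else 0) * realQuantile Fρ (1 - t)) ∂volume)
          ≤ ENNReal.ofReal x₀ ∧
        -- …and optimal among all feasible quantile functions `G`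
        ∀ G : ℝ → ℝ, (∀ t ∈ Set.Ioc (0 : ℝ) 1, 0 ≤ G t) →
          MonotoneOn G (Set.Ioc (0 : ℝ) 1) →
          (∀ t ∈ Set.Ioc (0 : ℝ) 1, Tendsto G (𝓝[<] t) (𝓝 (G t))) →
          (∫⁻ t in Set.Ioc (0 : ℝ) 1,
              ENNReal.ofReal (G t * realQuantile Fρ (1 - t)) ∂volume) ≤ ENNReal.ofReal x₀ →
          (⨆ t : Set.Ioc (0 : ℝ) 1, (F₁ (G (t : ℝ)) - (t : ℝ)))
            ≤ ⨆ t : Set.Ioc (0 : ℝ) 1,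
                (F₁ (if rs < (t : ℝ) then κs else 0) - (t : ℝ))) := by
  have := Measure.isProbabilityMeasure_map (μ := P) hρ.aemeasurable
  obtain rfl : Fρ = cdf (P.map ρ) := hFρ ▸ funext fun z => (cdf_map_apply P hρ z).symm
  set g := fun s => realQuantile (cdf (P.map ρ)) (1 - s)
  have hgpos : ∀ s ∈ Ioo (0 : ℝ) 1, 0 < g s := fun s hs =>
    realQuantile_cdf_pos _ (map_Iic_zero_eq_zero_of_pos P hρ hρpos) (by linarith [hs.2])
      (by linarith [hs.1])
  have hg0 : ∀ s ∈ Ioc (0 : ℝ) 1, 0 ≤ g s := by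
    intro s hs
    rcases hs.2.lt_or_eq with hs1 | rfl
    · exact (hgpos s ⟨hs.1, hs1⟩).le
    · simp [g, realQuantile_zero_of_nonneg (cdf_nonneg _)]
  have hg : IntegrableOn g (Ioc 0 1) := by
    have hrefl :=
      ((intervalIntegrable_iff_integrableOn_Ioo_of_le zero_le_one).2 hmean).comp_sub_left 1
    rw [sub_zero, sub_self] at hrefl
    exact (intervalIntegrable_iff_integrableOn_Ioc_of_le zero_le_one).1 hrefl.symm
  obtain ⟨rs, hrs, hmax, κs, hκs, hfeas, hopt⟩ :=
    goal_reaching_solution_of_weight hg0 hgpos hg hF₁mono hF₁cont hF₁bot hF₁top hx₀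
  exact ⟨rs, hrs, hmax, κs, hκs, hfeas, fun G hG0 hGmono _ hbud => hopt G hG0 hGmono hbud⟩

/-- Quantile formulation of the robust goal-reaching portfolio selection
problem. Let `ρ > 0` a.s. have continuous cdf `F_ρ` and finite mean (`∫_0^1 F_ρ⁻¹(s) ds < ∞`),
let `F₁` be a continuous cdf on `ℝ`, and `x₀ > 0`. Maximize
`sup_{t∈(0,1]} (F₁(G(t)) − t)` over increasing, left-continuous `G : (0,1] → [0,∞)` with
`∫_0^1 G(t) F_ρ⁻¹(1−t) dt ≤ x₀`. Then (a) `r ↦ F₁(x₀ / ∫_r^1 F_ρ⁻¹(1−s) ds) − r` attains its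
supremum over `[0,1)` at some `r*`; and (b) with `κ* = x₀ / ∫_{r*}^1 F_ρ⁻¹(1−s) ds`, the
function `G* = κ*·1_{(r*,1]}` is feasible and optimal. -/
theorem goal_reaching_quantile_solution {Ω : Type*} [MeasurableSpace Ω]
    (P : Measure Ω) [IsProbabilityMeasure P]
    (ρ : Ω → ℝ) (hρ : Measurable ρ) (hρpos : P {ω | 0 < ρ ω} = 1)
    (Fρ : ℝ → ℝ) (hFρ : Fρ = fun z => (P {ω | ρ ω ≤ z}).toReal)
    (hFρcont : Continuous Fρ)
    (hmean : IntegrableOn (fun s => realQuantile Fρ s) (Set.Ioo (0 : ℝ) 1))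
    (F₁ : ℝ → ℝ) (hF₁mono : Monotone F₁) (hF₁cont : Continuous F₁)
    (hF₁bot : Tendsto F₁ atBot (𝓝 0)) (hF₁top : Tendsto F₁ atTop (𝓝 1))
    (x₀ : ℝ) (hx₀ : 0 < x₀) :
    ∃ rs ∈ Set.Ico (0 : ℝ) 1,
      -- (a) `rs` maximizes `r ↦ F₁(x₀ / ∫_r^1 F_ρ⁻¹(1−s) ds) − r` over `[0,1)`
      (∀ r ∈ Set.Ico (0 : ℝ) 1,
        F₁ (x₀ / ∫ s in Set.Ioc r 1, realQuantile Fρ (1 - s)) - r ≤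
          F₁ (x₀ / ∫ s in Set.Ioc rs 1, realQuantile Fρ (1 - s)) - rs) ∧
      -- (b) with `κ* = x₀ / ∫_{rs}^1 F_ρ⁻¹(1−s) ds`, `G* = κ*·1_{(rs,1]}` is feasible…
      (∃ κs : ℝ, κs = x₀ / ∫ s in Set.Ioc rs 1, realQuantile Fρ (1 - s) ∧
        (∫⁻ t in Set.Ioc (0 : ℝ) 1,
            ENNReal.ofReal ((if rs < t then κs else 0) * realQuantile Fρ (1 - t)) ∂volume)
          ≤ ENNReal.ofReal x₀ ∧
        -- …and optimal among all feasible quantile functions `G`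
        ∀ G : ℝ → ℝ, (∀ t ∈ Set.Ioc (0 : ℝ) 1, 0 ≤ G t) →
          MonotoneOn G (Set.Ioc (0 : ℝ) 1) →
          (∀ t ∈ Set.Ioc (0 : ℝ) 1, Tendsto G (𝓝[<] t) (𝓝 (G t))) →
          (∫⁻ t in Set.Ioc (0 : ℝ) 1,
              ENNReal.ofReal (G t * realQuantile Fρ (1 - t)) ∂volume) ≤ ENNReal.ofReal x₀ →
          (⨆ t : Set.Ioc (0 : ℝ) 1, (F₁ (G (t : ℝ)) - (t : ℝ)))
            ≤ ⨆ t : Set.Ioc (0 : ℝ) 1,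
                (F₁ (if rs < (t : ℝ) then κs else 0) - (t : ℝ))) :=
  goal_reaching_quantile_solution_general P ρ hρ hρpos Fρ hFρ hmean F₁ hF₁mono hF₁cont hF₁bot hF₁top
    x₀ hx₀
end

section
/- Let X be a nonnegative random variable with essential supremum M < ∞ and survival function S_X = 1 − F_X, and let g be a distortion function. Then for any 0 ≤ η ≤ q ≤ q' ≤ M, 0 ≤ E^g[R_{η,q}(X)] − E^g[R_{η,q'}(X)] ≤ q' − q; that is, the map q ↦ E^g[R_{η,q}(X)] is decreasing and 1-Lipschitz continuous on [η, M]. -/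
/-!
Pointwise `R_{η,q'} ≤ R_{η,q} ≤ R_{η,q'} + (q' - q)`. The distorted expectation is monotone in
the random variable, since `g (1 - F)` is monotone in the cdf `F`, and for a nonnegative variable
it is translation equivariant, `E^g[Z + c] = E^g[Z] + c`: the integrand of `Z + c` is that of `Z`
shifted by `c`, and equals `g 1 = 1` on `(0, c)`. The bound `X ≤ M` makes every integrand vanish
beyond a finite point, which gives the integrability the comparisons need.
-/

open MeasureTheory

/-- A distortion function: increasing `g : [0,1] → [0,1]` with `g 0 = 0` and `g 1 = 1`. -/
def IsDistortion (g : ℝ → ℝ) : Prop :=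
  MonotoneOn g (Set.Icc 0 1) ∧ (∀ x ∈ Set.Icc (0:ℝ) 1, g x ∈ Set.Icc (0:ℝ) 1) ∧
    g 0 = 0 ∧ g 1 = 1

/-- The cdf of a real random variable `Z` under `P`. -/
noncomputable def cdfOf {Ω : Type*} [MeasurableSpace Ω] (P : Measure Ω) (Z : Ω → ℝ) :
    ℝ → ℝ := fun z => (P {ω | Z ω ≤ z}).toReal

/-- Distorted expectation `E^g[Z] = ∫_0^∞ g(1 − F_Z(z)) dz` of a nonnegative random
variable `Z`. -/
noncomputable def distExp {Ω : Type*} [MeasurableSpace Ω] (g : ℝ → ℝ) (P : Measure Ω)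
    (Z : Ω → ℝ) : ℝ := ∫ z in Set.Ioi (0 : ℝ), g (1 - cdfOf P Z z)

/-- The retained loss function `R_{η,q}`: `x` on `[0,η]`, `η` on `(η,q]`, `η + x − q` beyond. -/
noncomputable def Rfun (η q : ℝ) : ℝ → ℝ := fun x =>
  if x ≤ η then x else if x ≤ q then η else η + x - q

open Set Filter

section Cdf

variable {Ω : Type*} [MeasurableSpace Ω] {P : Measure Ω} {Z Z' : Ω → ℝ} {z : ℝ}

lemma cdfOf_nonneg : 0 ≤ cdfOf P Z z := ENNReal.toReal_nonneg

lemma cdfOf_le_one [IsProbabilityMeasure P] : cdfOf P Z z ≤ 1 :=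
  ENNReal.toReal_le_of_le_ofReal zero_le_one (by simpa using prob_le_one)

lemma cdfOf_mono [IsFiniteMeasure P] : Monotone (cdfOf P Z) := fun _ _ h =>
  ENNReal.toReal_mono (measure_ne_top P _) (measure_mono fun _ hω => le_trans hω h)

lemma cdfOf_le_cdfOf_of_le [IsFiniteMeasure P] (h : ∀ ω, Z ω ≤ Z' ω) :
    cdfOf P Z' z ≤ cdfOf P Z z :=
  ENNReal.toReal_mono (measure_ne_top P _) (measure_mono fun ω hω => (h ω).trans hω)

lemma cdfOf_eq_one_of_ae_le [IsProbabilityMeasure P] {M : ℝ} (hZ : ∀ᵐ ω ∂P, Z ω ≤ M)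
    (hz : M ≤ z) : cdfOf P Z z = 1 := by
  have hle : (univ : Set Ω) ≤ᵐ[P] {ω | Z ω ≤ z} := by
    filter_upwards [hZ] with ω hω _ using hω.trans hz
  have hP : P {ω | Z ω ≤ z} = 1 :=
    le_antisymm prob_le_one (measure_univ (μ := P) ▸ measure_mono_ae hle)
  simp [cdfOf, hP]

lemma cdfOf_eq_zero_of_ae_nonneg (hZ : ∀ᵐ ω ∂P, 0 ≤ Z ω) (hz : z < 0) : cdfOf P Z z = 0 := by
  have hP : P {ω | Z ω ≤ z} = 0 := measure_mono_null
    (fun ω (hω : Z ω ≤ z) => not_le.mpr (hω.trans_lt hz)) (ae_iff.mp hZ)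
  simp [cdfOf, hP]

lemma cdfOf_add_const (c : ℝ) : cdfOf P (fun ω => Z ω + c) z = cdfOf P Z (z - c) := by
  simp only [cdfOf, ← le_sub_iff_add_le]

end Cdf

noncomputable def distortedSurvival {Ω : Type*} [MeasurableSpace Ω] (g : ℝ → ℝ) (P : Measure Ω)
    (Z : Ω → ℝ) (z : ℝ) : ℝ :=
  g (1 - cdfOf P Z z)

section DistortedSurvival

variable {Ω : Type*} [MeasurableSpace Ω] {P : Measure Ω} {g : ℝ → ℝ} {Z Z' : Ω → ℝ} {z : ℝ}

lemma distortedSurvival_eq_one_of_ae_nonneg (hg : g 1 = 1) (hZ : ∀ᵐ ω ∂P, 0 ≤ Z ω)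
    (hz : z < 0) : distortedSurvival g P Z z = 1 := by
  rw [distortedSurvival, cdfOf_eq_zero_of_ae_nonneg hZ hz, sub_zero, hg]

lemma distortedSurvival_add_const (c : ℝ) :
    distortedSurvival g P (fun ω => Z ω + c) z = distortedSurvival g P Z (z - c) := by
  rw [distortedSurvival, distortedSurvival, cdfOf_add_const]

variable [IsProbabilityMeasure P]

lemma one_sub_cdfOf_mem_Icc : 1 - cdfOf P Z z ∈ Icc (0 : ℝ) 1 :=
  ⟨sub_nonneg.mpr cdfOf_le_one, sub_le_self _ cdfOf_nonneg⟩

lemma distortedSurvival_mem_Icc (hg : IsDistortion g) : distortedSurvival g P Z z ∈ Icc (0 : ℝ) 1 :=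
  hg.2.1 _ one_sub_cdfOf_mem_Icc

lemma distortedSurvival_le_of_le (hg : MonotoneOn g (Icc 0 1)) (h : ∀ ω, Z ω ≤ Z' ω) :
    distortedSurvival g P Z z ≤ distortedSurvival g P Z' z :=
  hg one_sub_cdfOf_mem_Icc one_sub_cdfOf_mem_Icc (sub_le_sub_left (cdfOf_le_cdfOf_of_le h) 1)

lemma antitone_distortedSurvival (hg : MonotoneOn g (Icc 0 1)) :
    Antitone (distortedSurvival g P Z) := fun _ _ h =>
  hg one_sub_cdfOf_mem_Icc one_sub_cdfOf_mem_Icc (sub_le_sub_left (cdfOf_mono h) 1)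

lemma distortedSurvival_eq_zero_of_ae_le (hg : g 0 = 0) {M : ℝ} (hZ : ∀ᵐ ω ∂P, Z ω ≤ M)
    (hz : M ≤ z) : distortedSurvival g P Z z = 0 := by
  rw [distortedSurvival, cdfOf_eq_one_of_ae_le hZ hz, sub_self, hg]

lemma integrableOn_distortedSurvival_Ioi (hg : IsDistortion g) {M : ℝ}
    (hZ : ∀ᵐ ω ∂P, Z ω ≤ M) (a : ℝ) : IntegrableOn (distortedSurvival g P Z) (Ioi a) := by
  have hIoc : IntegrableOn (distortedSurvival g P Z) (Ioc a M) :=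
    Measure.integrableOn_of_bounded measure_Ioc_lt_top.ne
      (antitone_distortedSurvival hg.1).measurable.aestronglyMeasurable
      (Eventually.of_forall fun z => by
        rw [Real.norm_eq_abs, abs_of_nonneg (distortedSurvival_mem_Icc hg).1]
        exact (distortedSurvival_mem_Icc hg).2)
  have hIoi : IntegrableOn (distortedSurvival g P Z) (Ioi M) :=
    integrableOn_zero.congr_fun
      (fun z hz => (distortedSurvival_eq_zero_of_ae_le hg.2.2.1 hZ hz.le).symm)
      measurableSet_Ioi
  refine (hIoc.union hIoi).mono_set fun z hz => ?_
  rcases le_or_gt z M with hzM | hzM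
  exacts [Or.inl ⟨hz, hzM⟩, Or.inr hzM]

end DistortedSurvival

lemma setIntegral_Ioi_comp_sub_const {E : Type*} [NormedAddCommGroup E] [NormedSpace ℝ E]
    (f : ℝ → E) (a c : ℝ) : ∫ z in Ioi a, f (z - c) = ∫ z in Ioi (a - c), f z := by
  have := (measurePreserving_sub_right volume c).setIntegral_preimage_emb
    (measurableEmbedding_subRight c) f (Ioi (a - c))
  rwa [preimage_sub_const_Ioi, sub_add_cancel] at this

section DistExp

variable {Ω : Type*} [MeasurableSpace Ω] {P : Measure Ω} {g : ℝ → ℝ} {Z Z' : Ω → ℝ} {M : ℝ}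

lemma distExp_eq_integral_distortedSurvival :
    distExp g P Z = ∫ z in Ioi 0, distortedSurvival g P Z z := rfl

variable [IsProbabilityMeasure P]

lemma distExp_mono (hg : IsDistortion g) (hZ' : ∀ᵐ ω ∂P, Z' ω ≤ M) (h : ∀ ω, Z ω ≤ Z' ω) :
    distExp g P Z ≤ distExp g P Z' :=
  integral_mono_of_nonneg (Eventually.of_forall fun _ => (distortedSurvival_mem_Icc hg).1)
    (integrableOn_distortedSurvival_Ioi hg hZ' 0)
    (Eventually.of_forall fun _ => distortedSurvival_le_of_le hg.1 h)

lemma distExp_add_const (hg : IsDistortion g) (hZ : ∀ᵐ ω ∂P, Z ω ≤ M)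
    (hZ0 : ∀ᵐ ω ∂P, 0 ≤ Z ω) {c : ℝ} (hc : 0 ≤ c) :
    distExp g P (fun ω => Z ω + c) = distExp g P Z + c := by
  have hInt := integrableOn_distortedSurvival_Ioi hg hZ
  have hOnInitial : ∫ z in Ioc (-c) 0, distortedSurvival g P Z z = c := by
    rw [integral_Ioc_eq_integral_Ioo, setIntegral_congr_fun measurableSet_Ioo
      fun z hz => distortedSurvival_eq_one_of_ae_nonneg hg.2.2.2 hZ0 hz.2]
    simp [measureReal_def, Real.volume_Ioo, hc]
  calc distExp g P (fun ω => Z ω + c)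
      = ∫ z in Ioi 0, distortedSurvival g P Z (z - c) := by
        simp only [distExp_eq_integral_distortedSurvival, distortedSurvival_add_const]
    _ = ∫ z in Ioi (-c), distortedSurvival g P Z z := by
        rw [setIntegral_Ioi_comp_sub_const, zero_sub]
    _ = (∫ z in Ioc (-c) 0, distortedSurvival g P Z z) + distExp g P Z := by
        rw [← Ioc_union_Ioi_eq_Ioi (neg_nonpos.mpr hc),
          setIntegral_union (Ioc_disjoint_Ioi le_rfl) measurableSet_Ioi
            ((hInt (-c)).mono_set Ioc_subset_Ioi_self) (hInt 0)]
        rfl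
    _ = distExp g P Z + c := by rw [hOnInitial, add_comm]

end DistExp

section Rfun

variable {η q q' x : ℝ}

lemma Rfun_nonneg (hη : 0 ≤ η) (hx : 0 ≤ x) : 0 ≤ Rfun η q x := by
  simp only [Rfun]; split_ifs <;> linarith

lemma Rfun_le_self (hq : η ≤ q) : Rfun η q x ≤ x := by
  simp only [Rfun]; split_ifs <;> linarith

lemma antitone_Rfun : Antitone fun q => Rfun η q x := fun q q' hqq' => by
  simp only [Rfun]; split_ifs <;> linarith

lemma Rfun_le_Rfun_add_sub (hqq' : q ≤ q') : Rfun η q x ≤ Rfun η q' x + (q' - q) := by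
  simp only [Rfun]; split_ifs <;> linarith

end Rfun

theorem distExp_layer_decreasing_lipschitz_general {Ω : Type*} [MeasurableSpace Ω]
    (P : Measure Ω) [IsProbabilityMeasure P]
    (X : Ω → ℝ) (hXnn : ∀ ω, 0 ≤ X ω)
    (M : ℝ) (hMbound : ∀ᵐ ω ∂P, X ω ≤ M)
    (g : ℝ → ℝ) (hg : IsDistortion g)
    (η q q' : ℝ) (hη : 0 ≤ η) (hq : η ≤ q) (hqq' : q ≤ q') :
    0 ≤ distExp g P (fun ω => Rfun η q (X ω)) - distExp g P (fun ω => Rfun η q' (X ω)) ∧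
      distExp g P (fun ω => Rfun η q (X ω)) - distExp g P (fun ω => Rfun η q' (X ω))
        ≤ q' - q := by
  have hbound : ∀ r, η ≤ r → ∀ᵐ ω ∂P, Rfun η r (X ω) ≤ M := fun r hr => by
    filter_upwards [hMbound] with ω hω using (Rfun_le_self hr).trans hω
  have hmono := distExp_mono hg (hbound q hq) fun _ => antitone_Rfun hqq'
  have hlip := distExp_mono hg ((hbound q' (hq.trans hqq')).mono fun ω hω => add_le_add_left hω _)
    fun _ => Rfun_le_Rfun_add_sub hqq'
  rw [distExp_add_const hg (hbound q' (hq.trans hqq'))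
    (Eventually.of_forall fun ω => Rfun_nonneg hη (hXnn ω)) (sub_nonneg.mpr hqq')] at hlip
  constructor <;> linarith

/-- **Lemma 3.1, first part.** For a nonnegative random variable `X` essentially
bounded by `M < ∞` and a distortion function `g`, for any `0 ≤ η ≤ q ≤ q' ≤ M`,
`0 ≤ E^g[R_{η,q}(X)] − E^g[R_{η,q'}(X)] ≤ q' − q`: the map `q ↦ E^g[R_{η,q}(X)]` is decreasing
and 1-Lipschitz on `[η, M]`. -/
theorem distExp_layer_decreasing_lipschitz {Ω : Type*} [MeasurableSpace Ω]
    (P : Measure Ω) [IsProbabilityMeasure P]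
    (X : Ω → ℝ) (hX : Measurable X) (hXnn : ∀ ω, 0 ≤ X ω)
    (M : ℝ) (hMbound : ∀ᵐ ω ∂P, X ω ≤ M)
    (hMleast : ∀ M' : ℝ, (∀ᵐ ω ∂P, X ω ≤ M') → M ≤ M')
    (g : ℝ → ℝ) (hg : IsDistortion g)
    (η q q' : ℝ) (hη : 0 ≤ η) (hq : η ≤ q) (hqq' : q ≤ q') (hq'M : q' ≤ M) :
    0 ≤ distExp g P (fun ω => Rfun η q (X ω)) - distExp g P (fun ω => Rfun η q' (X ω)) ∧
      distExp g P (fun ω => Rfun η q (X ω)) - distExp g P (fun ω => Rfun η q' (X ω))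
        ≤ q' - q :=
  distExp_layer_decreasing_lipschitz_general P X hXnn M hMbound g hg η q q' hη hq hqq'
end

section
/- Let R : [0,∞) → [0,∞) satisfy R(0) = 0 with both R and x ↦ x − R(x) increasing (i.e., 0 ≤ R(x') − R(x) ≤ x' − x for all 0 ≤ x ≤ x'). If R(q) ≤ η for some 0 ≤ η ≤ q, then R(x) ≤ R_{η,q}(x) for every x ≥ 0. -/
/-- A retained loss function: `R(0) = 0`, with both `R` and `x ↦ x − R(x)` increasing on
`[0,∞)` (so `0 ≤ R(x') − R(x) ≤ x' − x` for `0 ≤ x ≤ x'`), mapping `[0,∞)` to `[0,∞)`. -/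
def IsRetention (R : ℝ → ℝ) : Prop :=
  R 0 = 0 ∧ MonotoneOn R (Set.Ici 0) ∧ MonotoneOn (fun x => x - R x) (Set.Ici 0)

namespace IsRetention

variable {R : ℝ → ℝ} {x y : ℝ}

theorem apply_le_apply (hR : IsRetention R) (hx : 0 ≤ x) (hxy : x ≤ y) : R x ≤ R y :=
  hR.2.1 hx (hx.trans hxy) hxy

theorem le_add_sub (hR : IsRetention R) (hx : 0 ≤ x) (hxy : x ≤ y) : R y ≤ R x + (y - x) := by
  have := hR.2.2 hx (hx.trans hxy) hxy
  dsimp only at this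
  linarith

theorem le_self (hR : IsRetention R) (hx : 0 ≤ x) : R x ≤ x := by
  simpa [hR.1] using hR.le_add_sub le_rfl hx

end IsRetention

/-- **Lemma 3.1, second part.** If `R ∈ 𝓡` satisfies `R(q) ≤ η` for some
`0 ≤ η ≤ q`, then `R(x) ≤ R_{η,q}(x)` for every `x ≥ 0`. -/
theorem retention_le_layer (R : ℝ → ℝ) (hR : IsRetention R)
    (η q : ℝ) (hη : 0 ≤ η) (hηq : η ≤ q) (hRq : R q ≤ η) :
    ∀ x : ℝ, 0 ≤ x → R x ≤ Rfun η q x := by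
  intro x hx
  unfold Rfun
  split_ifs with _ hxq
  · exact hR.le_self hx
  · exact (hR.apply_le_apply hx hxq).trans hRq
  · have hqx : q ≤ x := (lt_of_not_ge hxq).le
    linarith [hR.le_add_sub (hη.trans hηq) hqx]
end
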